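/- arXiv:1502.05001 — 10 statements merged into one kernel-verified Lean document; each statement's English description precedes it below -/
import Mathlib

section
/- Let X be a metric space, A ⊆ X a subset, and U, V ⊆ A open in A. Define U' := {x ∈ X | d(x,U) < d(x, A \ U)} and similarly V'. Then U' ∩ V' ≠ ∅ if and only if U ∩ V ≠ ∅. -/
/-! If `U` and `V` are disjoint, then `V ⊆ A \ U` and `U ⊆ A \ V`, so the two strict inequalities
defining `U'` and `V'` would chain into `d(x, U) < d(x, U)`. Conversely, a point of `U` is at
distance `0` from `U` but, by relative openness, outside the closure of `A \ U`. -/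

open Metric

section

variable {X : Type*} [PseudoEMetricSpace X] {A U V W : Set X} {x : X}

theorem infEDist_lt_infEDist_diff_of_mem (hW : IsOpen W) (hU : U = W ∩ A) (hx : x ∈ U) :
    infEDist x U < infEDist x (A \ U) := by
  have hdisj : Disjoint W (A \ U) :=
    Set.disjoint_left.mpr fun y hyW hy => hy.2 (hU ▸ ⟨hyW, hy.1⟩)
  have hpos : 0 < infEDist x (A \ U) :=
    infEDist_pos_iff_notMem_closure.mpr fun hcl =>
      Set.disjoint_left.mp (hdisj.closure_right hW) (hU ▸ hx).1 hcl
  rwa [infEDist_zero_of_mem hx]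

theorem not_infEDist_lt_infEDist_diff_of_disjoint (hUA : U ⊆ A) (hVA : V ⊆ A)
    (hUV : Disjoint U V) (hxU : infEDist x U < infEDist x (A \ U)) :
    ¬ infEDist x V < infEDist x (A \ V) := by
  have hV : infEDist x (A \ U) ≤ infEDist x V :=
    infEDist_anti fun y hy => ⟨hVA hy, Set.disjoint_right.mp hUV hy⟩
  have hU : infEDist x (A \ V) ≤ infEDist x U :=
    infEDist_anti fun y hy => ⟨hUA hy, Set.disjoint_left.mp hUV hy⟩
  exact fun hxV => lt_irrefl _ ((hxU.trans_le hV).trans (hxV.trans_le hU))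

end

theorem stmt6 {X : Type*} [MetricSpace X] (A U V : Set X) (hUA : U ⊆ A) (hVA : V ⊆ A)
    (hUopen : ∃ W : Set X, IsOpen W ∧ U = W ∩ A)
    (hVopen : ∃ W : Set X, IsOpen W ∧ V = W ∩ A) :
    ({x : X | EMetric.infEdist x U < EMetric.infEdist x (A \ U)} ∩
        {x : X | EMetric.infEdist x V < EMetric.infEdist x (A \ V)}).Nonempty ↔
      (U ∩ V).Nonempty := by
  constructor
  · rintro ⟨x, hxU, hxV⟩
    rw [← Set.not_disjoint_iff_nonempty_inter]
    exact fun hUV => not_infEDist_lt_infEDist_diff_of_disjoint hUA hVA hUV hxU hxV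
  · obtain ⟨WU, hWU, hU⟩ := hUopen
    obtain ⟨WV, hWV, hV⟩ := hVopen
    rintro ⟨x, hxU, hxV⟩
    exact ⟨x, infEDist_lt_infEDist_diff_of_mem hWU hU hxU,
      infEDist_lt_infEDist_diff_of_mem hWV hV hxV⟩
end

section
/- Let X be a metric space with a proper isometric G-action, where G acts by a continuous ℝ-flow Φ commuting appropriately (X is a flow space). If there exist g ∈ G and t > 0 with Φ_t(c) = g·c for some c ∈ X, then the flow line Φ_ℝ(c) = {Φ_s(c) | s ∈ ℝ} is closed in X. -/
/-!
Write `K` for the image of `[0, t]` under `s ↦ s +ᵥ c`. Since `Φ_t c = g • c` and the flow commutes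
with `G`, `Φ_{nt} c = gⁿ • c`, so the flow line is the union of the translates `gⁿ • K`, `n ∈ ℤ`.
For a proper action, any union of translates of a compact set is closed: if `u k ∈ g_k • K` tends
to `x`, the compact set `C = K ∪ {x} ∪ {u k}` meets `g_k • C`, so only finitely many `g_k` occur
and the `u k` stay in a finite, hence closed, union of translates of `K`.
-/

open Pointwise Set Filter Topology

theorem isClosed_iUnion_smul_of_isCompact {G X ι : Type*} [Group G] [TopologicalSpace X]
    [SequentialSpace X] [T2Space X] [MulAction G X]
    (hcont : ∀ g : G, Continuous fun x : X => g • x)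
    (hproper : ∀ K : Set X, IsCompact K → {g : G | (K ∩ g • K).Nonempty}.Finite)
    (f : ι → G) {K : Set X} (hK : IsCompact K) :
    IsClosed (⋃ i, f i • K) := by
  refine IsSeqClosed.isClosed fun u x hu hux => ?_
  choose i hi using fun k => mem_iUnion.1 (hu k)
  set C := K ∪ insert x (range u)
  set S := {g : G | (C ∩ g • C).Nonempty} ∩ range f
  have hS : S.Finite := (hproper C (hK.union hux.isCompact_insert_range)).inter_of_left _
  have hu_mem : ∀ k, u k ∈ ⋃ g ∈ S, g • K := fun k => by
    obtain ⟨y, hyK, hyu⟩ := hi k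
    exact mem_biUnion ⟨⟨u k, Or.inr (mem_insert_of_mem _ ⟨k, rfl⟩), y, Or.inl hyK, hyu⟩,
      i k, rfl⟩ (hi k)
  have hclosed : IsClosed (⋃ g ∈ S, g • K) :=
    hS.isClosed_biUnion fun g _ => (hK.image (hcont g)).isClosed
  obtain ⟨g, ⟨-, j, rfl⟩, hx⟩ :=
    mem_iUnion₂.1 (hclosed.mem_of_tendsto hux (Eventually.of_forall hu_mem))
  exact mem_iUnion.2 ⟨j, hx⟩

section Flow

variable {G X : Type*} [Group G] [MulAction G X] [AddAction ℝ X] {c : X} {g : G} {t : ℝ}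

theorem intCast_mul_vadd_eq_zpow_smul
    (hcomm : ∀ (g : G) (t : ℝ) (x : X), t +ᵥ (g • x) = g • (t +ᵥ x))
    (h : t +ᵥ c = g • c) (n : ℤ) :
    ((n : ℝ) * t) +ᵥ c = g ^ n • c := by
  have step : ∀ m : ℤ, ((m : ℝ) * t) +ᵥ c = g ^ m • c ↔
      (((m + 1 : ℤ) : ℝ) * t) +ᵥ c = g ^ (m + 1) • c := fun m => by
    rw [Int.cast_add, Int.cast_one, add_one_mul, add_comm, add_vadd, zpow_add_one, mul_smul, ← h,
      ← hcomm, vadd_left_cancel_iff]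
  induction n using Int.induction_on with
  | zero => simp
  | succ m ih => exact (step m).1 ih
  | pred m ih => exact (step _).2 (by rwa [sub_add_cancel])

theorem range_vadd_eq_iUnion_zpow_smul
    (hcomm : ∀ (g : G) (t : ℝ) (x : X), t +ᵥ (g • x) = g • (t +ᵥ x))
    (ht : 0 < t) (h : t +ᵥ c = g • c) :
    range (fun s : ℝ => s +ᵥ c) = ⋃ n : ℤ, g ^ n • ((· +ᵥ c) '' Icc 0 t) := by
  have hshift : ∀ (n : ℤ) (r : ℝ), g ^ n • (r +ᵥ c) = (r + n * t) +ᵥ c := fun n r => by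
    rw [← hcomm, ← intCast_mul_vadd_eq_zpow_smul hcomm h, ← add_vadd]
  ext x
  constructor
  · rintro ⟨s, rfl⟩
    refine mem_iUnion.2 ⟨⌊s / t⌋, _, ⟨s - ⌊s / t⌋ * t, ⟨Int.sub_floor_div_mul_nonneg s ht,
      (Int.sub_floor_div_mul_lt s ht).le⟩, rfl⟩, ?_⟩
    simp only [hshift, sub_add_cancel]
  · intro hx
    obtain ⟨n, _, ⟨r, -, rfl⟩, rfl⟩ := mem_iUnion.1 hx
    exact ⟨r + n * t, (hshift n r).symm⟩

end Flow

theorem stmt8 {G X : Type*} [Group G] [MetricSpace X] [MulAction G X] [AddAction ℝ X]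
    (hiso : ∀ g : G, Isometry (fun x : X => g • x))
    (hproper : ∀ K : Set X, IsCompact K → {g : G | (K ∩ g • K).Nonempty}.Finite)
    (hflowcont : Continuous fun p : ℝ × X => p.1 +ᵥ p.2)
    (hcomm : ∀ (g : G) (t : ℝ) (x : X), t +ᵥ (g • x) = g • (t +ᵥ x))
    (c : X) (g : G) (t : ℝ) (ht : 0 < t) (h : t +ᵥ c = g • c) :
    IsClosed (Set.range fun s : ℝ => s +ᵥ c) := by
  have hK : IsCompact ((· +ᵥ c) '' Icc 0 t) :=
    isCompact_Icc.image (hflowcont.comp (continuous_id.prodMk continuous_const))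
  rw [range_vadd_eq_iUnion_zpow_smul hcomm ht h]
  exact isClosed_iUnion_smul_of_isCompact (fun g => (hiso g).continuous) hproper _ hK
end

section
/- Let X be a flow space for G and γ > 0. The subspace X_axes of all axes with G-period at most γ is closed in X. Here X_axes consists of all points c ∈ X that are not on a compact flow line (there is no t > 0 with Φ_t(c) = c) but satisfy Φ_t(c) = g·c for some g ∈ G and some t ∈ (0,γ]. -/
open Pointwise

private lemma iter_vadd {G X : Type*} [Group G] [MulAction G X] [AddAction ℝ X]
    (hcomm : ∀ (g : G) (t : ℝ) (x : X), t +ᵥ (g • x) = g • (t +ᵥ x))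
    {g : G} {t : ℝ} {x : X} (h : t +ᵥ x = g • x) :
    ∀ k : ℕ, ((k : ℝ) * t) +ᵥ x = g ^ k • x := by
  intro k
  induction k with
  | zero => simp
  | succ n ih =>
    have he : ((n + 1 : ℕ) : ℝ) * t = t + (n : ℝ) * t := by push_cast; ring
    rw [he, add_vadd, ih, hcomm, h, ← mul_smul, ← pow_succ]

theorem stmt9 {G X : Type*} [Group G] [MetricSpace X] [MulAction G X] [AddAction ℝ X]
    (hiso : ∀ g : G, Isometry (fun x : X => g • x))
    (hproper : ∀ K : Set X, IsCompact K → {g : G | (K ∩ g • K).Nonempty}.Finite)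
    (hflowcont : Continuous fun p : ℝ × X => p.1 +ᵥ p.2)
    (hcomm : ∀ (g : G) (t : ℝ) (x : X), t +ᵥ (g • x) = g • (t +ᵥ x))
    (γ : ℝ) (hγ : 0 < γ) :
    IsClosed {x : X | (¬ ∃ t : ℝ, 0 < t ∧ t +ᵥ x = x) ∧
      ∃ g : G, ∃ t : ℝ, 0 < t ∧ t ≤ γ ∧ t +ᵥ x = g • x} := by
  apply IsSeqClosed.isClosed
  intro u x hu hux
  have hnp : ∀ n, ¬ ∃ s : ℝ, 0 < s ∧ s +ᵥ u n = u n := fun n => (hu n).1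
  choose g t ht0 htγ heq using fun n => (hu n).2
  -- a compact set containing all `u n` and all `g n • u n`
  set K₀ : Set X := insert x (Set.range u) with hK₀def
  have hK₀ : IsCompact K₀ := hux.isCompact_insert_range
  set K : Set X := K₀ ∪ (fun p : ℝ × X => p.1 +ᵥ p.2) '' (Set.Icc 0 γ ×ˢ K₀) with hKdef
  have hK : IsCompact K := hK₀.union ((isCompact_Icc.prod hK₀).image hflowcont)
  have hgmem : ∀ n, g n ∈ {h : G | (K ∩ h • K).Nonempty} := by
    intro n
    refine ⟨g n • u n, ?_, ?_⟩
    · rw [← heq n]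
      exact Or.inr ⟨(t n, u n), ⟨⟨(ht0 n).le, htγ n⟩, Or.inr ⟨n, rfl⟩⟩, rfl⟩
    · exact ⟨u n, Or.inl (Or.inr ⟨n, rfl⟩), rfl⟩
  -- take an ultrafilter extending atTop
  let U : Ultrafilter ℕ := Ultrafilter.of Filter.atTop
  have hUle : (U : Filter ℕ) ≤ Filter.atTop := Ultrafilter.of_le _
  -- g is eventually constant along U
  have hFmem : {h : G | (K ∩ h • K).Nonempty} ∈ Ultrafilter.map g U := by
    rw [Ultrafilter.mem_map]
    exact Filter.univ_mem' hgmem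
  obtain ⟨g₀, hg₀mem, hg₀⟩ : ∃ g₀ ∈ {h : G | (K ∩ h • K).Nonempty}, U.map g = pure g₀ :=
    Ultrafilter.eq_pure_of_finite_mem (hproper K hK) hFmem
  have hgev : ∀ᶠ n in (U : Filter ℕ), g n = g₀ := by
    have : {g₀} ∈ U.map g := by rw [hg₀]; exact Filter.mem_pure.2 rfl
    exact Filter.mem_map.1 this
  -- t converges along U to some t₀ ∈ [0, γ]
  have hIccmem : Set.Icc (0:ℝ) γ ∈ Ultrafilter.map t U := by
    rw [Ultrafilter.mem_map]
    exact Filter.univ_mem' (fun n => ⟨(ht0 n).le, htγ n⟩)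
  obtain ⟨t₀, ht₀mem, ht₀⟩ : ∃ t₀ ∈ Set.Icc (0:ℝ) γ, (U.map t : Filter ℝ) ≤ nhds t₀ :=
    isCompact_Icc.ultrafilter_le_nhds (U.map t) (Filter.le_principal_iff.2 hIccmem)
  have htt : Filter.Tendsto t (U : Filter ℕ) (nhds t₀) := by
    rwa [Filter.Tendsto, ← Ultrafilter.coe_map]
  have huu : Filter.Tendsto u (U : Filter ℕ) (nhds x) := hux.mono_left hUle
  -- pass to the limit in the equation
  have h1 : Filter.Tendsto (fun n => t n +ᵥ u n) (U : Filter ℕ) (nhds (t₀ +ᵥ x)) :=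
    (hflowcont.tendsto (t₀, x)).comp (htt.prodMk_nhds huu)
  have h2 : Filter.Tendsto (fun n => t n +ᵥ u n) (U : Filter ℕ) (nhds (g₀ • x)) := by
    have h3 : Filter.Tendsto (fun n => g₀ • u n) (U : Filter ℕ) (nhds (g₀ • x)) :=
      ((hiso g₀).continuous.tendsto x).comp huu
    refine h3.congr' ?_
    filter_upwards [hgev] with n hn
    rw [heq n, hn]
  have key : t₀ +ᵥ x = g₀ • x := tendsto_nhds_unique h1 h2
  -- g₀ occurs as some g n, hence has infinite order
  obtain ⟨n₀, hn₀⟩ : ∃ n, g n = g₀ := hgev.exists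
  have hnotfin : ∀ k : ℕ, 0 < k → g₀ ^ k ≠ 1 := by
    intro k hk hk1
    apply hnp n₀
    refine ⟨k * t n₀, mul_pos (by exact_mod_cast hk) (ht0 n₀), ?_⟩
    rw [iter_vadd hcomm (heq n₀) k, hn₀, hk1, one_smul]
  have hinj : Function.Injective fun k : ℕ => g₀ ^ k := by
    rw [injective_pow_iff_not_isOfFinOrder]
    intro hfin
    obtain ⟨k, hk, hk1⟩ := isOfFinOrder_iff_pow_eq_one.1 hfin
    exact hnotfin k hk hk1
  -- t₀ > 0 : otherwise g₀ fixes x and has infinitely many powers fixing x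
  have ht₀pos : 0 < t₀ := by
    rcases ht₀mem.1.lt_or_eq with h | h
    · exact h
    · exfalso
      have hx : g₀ • x = x := by rw [← key, ← h, zero_vadd]
      have hxk : ∀ k : ℕ, g₀ ^ k • x = x := by
        intro k
        induction k with
        | zero => simp
        | succ m ih => rw [pow_succ, mul_smul, hx, ih]
      have hmem : ∀ k : ℕ, g₀ ^ k ∈ {h : G | (({x} : Set X) ∩ h • {x}).Nonempty} :=
        fun k => ⟨x, rfl, ⟨x, rfl, hxk k⟩⟩
      exact (hproper {x} isCompact_singleton).not_infinite
        (Set.infinite_of_injective_forall_mem hinj hmem)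
  -- x is not flow-periodic
  have hnpx : ¬ ∃ s : ℝ, 0 < s ∧ s +ᵥ x = x := by
    rintro ⟨s, hs, hsx⟩
    -- the orbit of x under the flow is contained in the compact set C
    set C : Set X := (fun p : ℝ × X => p.1 +ᵥ p.2) '' (Set.Icc 0 s ×ˢ {x}) with hCdef
    have hC : IsCompact C := (isCompact_Icc.prod isCompact_singleton).image hflowcont
    have hxC : x ∈ C := ⟨(0, x), ⟨⟨le_refl 0, hs.le⟩, rfl⟩, zero_vadd ℝ x⟩
    have hperiod : ∀ m : ℕ, ((m : ℝ) * s) +ᵥ x = x := by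
      intro m
      have : s +ᵥ x = (1 : G) • x := by rw [hsx, one_smul]
      rw [iter_vadd hcomm this m, one_pow, one_smul]
    have horb : ∀ r : ℝ, 0 ≤ r → r +ᵥ x ∈ C := by
      intro r hr
      set m : ℕ := ⌊r / s⌋₊ with hmdef
      have hms : (m : ℝ) * s ≤ r := by
        rw [← le_div_iff₀ hs]
        exact Nat.floor_le (div_nonneg hr hs.le)
      have hrm : r - m * s ≤ s := by
        have := (Nat.lt_floor_add_one (r / s)).le
        have h2 : r / s ≤ m + 1 := by
          calc r / s ≤ (⌊r / s⌋₊ : ℝ) + 1 := (Nat.lt_floor_add_one _).le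
          _ = (m : ℝ) + 1 := rfl
        nlinarith [(div_le_iff₀ hs).1 h2]
      have hre : r +ᵥ x = (r - m * s) +ᵥ x := by
        conv_lhs => rw [show r = (r - m * s) + m * s by ring]
        rw [add_vadd, hperiod m]
      rw [hre]
      exact ⟨(r - m * s, x), Set.mk_mem_prod ⟨by linarith, hrm⟩ rfl, rfl⟩
    -- infinitely many powers of g₀ move C into itself
    have hmemall : ∀ k : ℕ, g₀ ^ k ∈ {h : G | (C ∩ h • C).Nonempty} := by
      intro k
      refine ⟨g₀ ^ k • x, ?_, ⟨x, hxC, rfl⟩⟩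
      rw [← iter_vadd hcomm key k]
      exact horb _ (by positivity)
    exact (hproper C hC).not_infinite (Set.infinite_of_injective_forall_mem hinj hmemall)
  exact ⟨hnpx, g₀, t₀, ht₀pos, ht₀mem.2, key⟩
end

section
/- Let X be a flow space for G and γ > 0, and let L, L' ⊆ X_axes be compact subsets of the space of axes with G-period at most γ. Then the set {t ∈ ℝ | Φ_t(L) ∩ L' ≠ ∅} is a compact subset of ℝ. -/
open Pointwise

theorem stmt10 {G X : Type*} [Group G] [MetricSpace X] [MulAction G X] [AddAction ℝ X]
    (hiso : ∀ g : G, Isometry (fun x : X => g • x))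
    (hproper : ∀ K : Set X, IsCompact K → {g : G | (K ∩ g • K).Nonempty}.Finite)
    (hflowcont : Continuous fun p : ℝ × X => p.1 +ᵥ p.2)
    (hcomm : ∀ (g : G) (t : ℝ) (x : X), t +ᵥ (g • x) = g • (t +ᵥ x))
    (γ : ℝ) (hγ : 0 < γ)
    (Xaxes : Set X)
    (hXaxes : Xaxes = {x : X | (¬ ∃ t : ℝ, 0 < t ∧ t +ᵥ x = x) ∧
      ∃ g : G, ∃ t : ℝ, 0 < t ∧ t ≤ γ ∧ t +ᵥ x = g • x})
    (L L' : Set X) (hL : IsCompact L) (hL' : IsCompact L')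
    (hLsub : L ⊆ Xaxes) (hL'sub : L' ⊆ Xaxes) :
    IsCompact {t : ℝ | ∃ x ∈ L, t +ᵥ x ∈ L'} := by
  -- period rigidity for non-periodic points
  have per : ∀ (x : X), (¬ ∃ s : ℝ, 0 < s ∧ s +ᵥ x = x) → ∀ u v : ℝ, u +ᵥ x = v +ᵥ x → u = v := by
    intro x hnp u v huv
    by_contra hne
    have h1 : (u - v) +ᵥ x = x := by
      have := congrArg (fun y => (-v) +ᵥ y) huv
      simp only [vadd_vadd] at this
      rw [show -v + u = u - v by ring] at this
      simpa using this
    rcases lt_or_gt_of_ne hne with h | h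
    · have h2 : (v - u) +ᵥ x = x := by
        have h3 := congrArg (fun y => (v - u) +ᵥ y) h1
        simp only [vadd_vadd] at h3
        rw [show v - u + (u - v) = 0 by ring, zero_vadd] at h3
        exact h3.symm
      exact hnp ⟨v - u, by linarith, h2⟩
    · exact hnp ⟨u - v, by linarith, h1⟩
  -- powers along an axis
  have axis_pow : ∀ (a : G) (x : X) (tx : ℝ), tx +ᵥ x = a • x →
      ∀ (m : ℤ), a ^ m • x = ((m : ℝ) * tx) +ᵥ x := by
    intro a x tx hax
    have hstep : ∀ s : ℝ, a • (s +ᵥ x) = (s + tx) +ᵥ x := by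
      intro s
      rw [← hcomm a s x, ← hax, vadd_vadd]
    have hnat : ∀ (n : ℕ) (s : ℝ), a ^ n • (s +ᵥ x) = (s + (n : ℝ) * tx) +ᵥ x := by
      intro n
      induction n with
      | zero => intro s; simp
      | succ k ih =>
        intro s
        rw [pow_succ, mul_smul, hstep, ih]
        try congr 1
        all_goals (push_cast; ring)
    intro m
    obtain ⟨n, rfl | rfl⟩ := m.eq_nat_or_neg
    · rw [zpow_natCast]
      have := hnat n 0
      simpa using this
    · rw [zpow_neg, zpow_natCast, inv_smul_eq_iff]
      push_cast
      rw [hnat n (-(n : ℝ) * tx), show -(n : ℝ) * tx + (n : ℝ) * tx = 0 by ring, zero_vadd]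
  -- the compact set K and the finite set F
  have hKim : IsCompact ((fun p : ℝ × X => p.1 +ᵥ p.2) '' (Set.Icc (-γ) γ ×ˢ L)) :=
    (isCompact_Icc.prod hL).image hflowcont
  set K : Set X := (L ∪ L') ∪ (fun p : ℝ × X => p.1 +ᵥ p.2) '' (Set.Icc (-γ) γ ×ˢ L) with hKdef
  have hK : IsCompact K := (hL.union hL').union hKim
  have hF : {g : G | (K ∩ g • K).Nonempty}.Finite := hproper K hK
  set F : Set G := {g : G | (K ∩ g • K).Nonempty} with hFdef
  have memK : ∀ (s : ℝ) (x : X), x ∈ L → |s| ≤ γ → s +ᵥ x ∈ K := by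
    intro s x hx hs
    exact Or.inr ⟨(s, x), ⟨Set.mem_Icc.mpr (abs_le.mp hs), hx⟩, rfl⟩
  have hLK : L ⊆ K := fun x hx => Or.inl (Or.inl hx)
  have hL'K : L' ⊆ K := fun x hx => Or.inl (Or.inr hx)
  -- the fibers
  set T' : G → G → Set ℝ := fun a b => {t : ℝ | ∃ x ∈ L, ∃ tx : ℝ, ∃ m : ℤ,
    (¬ ∃ s : ℝ, 0 < s ∧ s +ᵥ x = x) ∧ 0 < tx ∧ tx ≤ γ ∧ tx +ᵥ x = a • x ∧
    |t - (m : ℝ) * tx| ≤ γ ∧ a ^ (-m) = b} with hT'def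
  set T : Set ℝ := {t : ℝ | ∃ x ∈ L, t +ᵥ x ∈ L'} with hTdef
  -- T is covered by the fibers
  have hcover : T ⊆ ⋃ a ∈ F, ⋃ b ∈ F, T' a b := by
    intro t ht
    obtain ⟨x, hx, hx'⟩ := ht
    have hxax := hLsub hx
    rw [hXaxes] at hxax
    obtain ⟨hnp, a, tx, htx0, htxγ, hax⟩ := hxax
    set m : ℤ := round (t / tx) with hmdef
    have htxne : tx ≠ 0 := ne_of_gt htx0
    have hclose : |t - (m : ℝ) * tx| ≤ γ := by
      have h1 : |t / tx - (m : ℝ)| ≤ 1 / 2 := abs_sub_round (t / tx)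
      have h2 : |t - (m : ℝ) * tx| = |t / tx - (m : ℝ)| * |tx| := by
        rw [← abs_mul, sub_mul, div_mul_cancel₀ _ htxne]
      rw [h2, abs_of_pos htx0]
      calc |t / tx - (m : ℝ)| * tx ≤ (1 / 2) * tx := by
            apply mul_le_mul_of_nonneg_right h1 (le_of_lt htx0)
        _ ≤ γ := by linarith
    have haF : a ∈ F := by
      refine ⟨a • x, ?_, ⟨x, hLK hx, rfl⟩⟩
      rw [← hax]
      exact memK tx x hx (by rw [abs_of_pos htx0]; exact htxγ)
    have hbF : a ^ (-m) ∈ F := by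
      refine ⟨a ^ (-m) • (t +ᵥ x), ?_, ⟨t +ᵥ x, hL'K hx', rfl⟩⟩
      have : a ^ (-m) • (t +ᵥ x) = (t - (m : ℝ) * tx) +ᵥ x := by
        rw [← hcomm (a ^ (-m)) t x, axis_pow a x tx hax (-m), vadd_vadd]
        congr 1
        push_cast
        ring
      rw [this]
      exact memK _ x hx hclose
    refine Set.mem_biUnion haF (Set.mem_biUnion hbF ?_)
    exact ⟨x, hx, tx, m, hnp, htx0, htxγ, hax, hclose, rfl⟩
  -- each fiber is bounded
  have hfib : ∀ a b : G, Bornology.IsBounded (T' a b) := by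
    intro a b
    rcases Set.eq_empty_or_nonempty (T' a b) with he | ⟨t₀, ht₀⟩
    · rw [he]; exact Bornology.isBounded_empty
    obtain ⟨x₀, hx₀, tx₀, m₀, hnp₀, htx₀0, htx₀γ, hax₀, hclose₀, hb₀⟩ := ht₀
    have : T' a b ⊆ Set.Icc (-(|(m₀ : ℝ)| * γ + γ)) (|(m₀ : ℝ)| * γ + γ) := by
      intro t ht
      obtain ⟨x, hx, tx, m, hnp, htx0, htxγ, hax, hclose, hb⟩ := ht
      -- a^(-m) = b = a^(-m₀), hence a^m = a^m₀, hence m = m₀ by nonperiodicity of x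
      have hmm : m = m₀ := by
        have h1 : a ^ m = a ^ m₀ := by
          have : (a ^ (-m))⁻¹ = (a ^ (-m₀))⁻¹ := by rw [hb, hb₀]
          simpa [zpow_neg] using this
        have h2 : ((m : ℝ) * tx) +ᵥ x = ((m₀ : ℝ) * tx) +ᵥ x := by
          rw [← axis_pow a x tx hax m, ← axis_pow a x tx hax m₀, h1]
        have h3 : (m : ℝ) * tx = (m₀ : ℝ) * tx := per x hnp _ _ h2
        have h4 : (m : ℝ) = (m₀ : ℝ) := mul_right_cancel₀ (ne_of_gt htx0) h3
        exact_mod_cast h4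
      rw [hmm] at hclose
      have hbound : |t| ≤ |(m₀ : ℝ)| * γ + γ := by
        have h5 : |(m₀ : ℝ) * tx| ≤ |(m₀ : ℝ)| * γ := by
          rw [abs_mul]
          apply mul_le_mul_of_nonneg_left _ (abs_nonneg _)
          rw [abs_of_pos htx0]; exact htxγ
        calc |t| ≤ |t - (m₀ : ℝ) * tx| + |(m₀ : ℝ) * tx| := by
              have := abs_add_le (t - (m₀ : ℝ) * tx) ((m₀ : ℝ) * tx)
              simpa using this
          _ ≤ |(m₀ : ℝ)| * γ + γ := by linarith
      rw [Set.mem_Icc]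
      constructor <;> [linarith [abs_le.mp hbound |>.1]; exact (abs_le.mp hbound).2]
    exact Bornology.IsBounded.subset (Metric.isBounded_Icc _ _) this
  -- hence T is bounded
  have hTb : Bornology.IsBounded T := by
    apply Bornology.IsBounded.subset _ hcover
    rw [Bornology.isBounded_biUnion hF]
    intro a _
    rw [Bornology.isBounded_biUnion hF]
    intro b _
    exact hfib a b
  -- T is the projection of a compact set
  obtain ⟨R, hR⟩ := (Metric.isBounded_iff_subset_closedBall (0 : ℝ)).mp hTb
  have hTR : T ⊆ Set.Icc (-R) R := by
    intro t ht
    have := hR ht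
    rwa [Real.closedBall_eq_Icc, zero_sub, zero_add] at this
  have hA : IsCompact ((Set.Icc (-R) R ×ˢ L) ∩ {p : ℝ × X | p.1 +ᵥ p.2 ∈ L'}) := by
    apply IsCompact.inter_right (isCompact_Icc.prod hL)
    exact hL'.isClosed.preimage hflowcont
  have hTeq : T = Prod.fst '' ((Set.Icc (-R) R ×ˢ L) ∩ {p : ℝ × X | p.1 +ᵥ p.2 ∈ L'}) := by
    ext t
    constructor
    · intro ht
      have htI := hTR ht
      obtain ⟨x, hx, hx'⟩ := ht
      exact ⟨(t, x), ⟨⟨htI, hx⟩, hx'⟩, rfl⟩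
    · rintro ⟨⟨s, x⟩, ⟨⟨_, hx⟩, hx'⟩, rfl⟩
      exact ⟨x, hx, hx'⟩
  rw [hTeq] at hTb ⊢
  exact hA.image continuous_fst
end

section
/- Let X be a flow space for G and γ > 0. For every y ∈ Y_axes := ℝ\X_axes (the quotient of the axes space by the flow), the stabilizer G_y = {g ∈ G | g·y = y} is virtually cyclic of type I, i.e., it surjects onto ℤ with finite kernel. -/
open Pointwise

theorem stmt11 {G X : Type*} [Group G] [MetricSpace X] [MulAction G X] [AddAction ℝ X]
    (hiso : ∀ g : G, Isometry (fun x : X => g • x))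
    (hproper : ∀ K : Set X, IsCompact K → {g : G | (K ∩ g • K).Nonempty}.Finite)
    (hflowcont : Continuous fun p : ℝ × X => p.1 +ᵥ p.2)
    (hcomm : ∀ (g : G) (t : ℝ) (x : X), t +ᵥ (g • x) = g • (t +ᵥ x))
    (γ : ℝ) (hγ : 0 < γ)
    (c : X)
    (hc : c ∈ {x : X | (¬ ∃ t : ℝ, 0 < t ∧ t +ᵥ x = x) ∧
      ∃ g : G, ∃ t : ℝ, 0 < t ∧ t ≤ γ ∧ t +ᵥ x = g • x}) :
    ∃ φ : MulAction.stabilizer G (Set.range fun t : ℝ => t +ᵥ c) →* Multiplicative ℤ,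
      Function.Surjective φ ∧ Set.Finite (φ.ker : Set (MulAction.stabilizer G (Set.range fun t : ℝ => t +ᵥ c))) := by
  obtain ⟨hper, g₀, t₀, ht₀pos, ht₀γ, hg₀⟩ := hc
  set L : Set X := Set.range fun t : ℝ => t +ᵥ c with hLdef
  -- the flow line through c is injectively parametrized
  have key : ∀ s t : ℝ, s +ᵥ c = t +ᵥ c → (t - s) +ᵥ c = c := by
    intro s t hst
    have h1 : (-s) +ᵥ (s +ᵥ c) = c := by rw [← add_vadd, neg_add_cancel, zero_vadd]
    have h2 : (-s) +ᵥ (t +ᵥ c) = (t - s) +ᵥ c := by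
      rw [← add_vadd]; congr 1; ring
    rw [hst, h2] at h1; exact h1
  have hinj : ∀ s t : ℝ, s +ᵥ c = t +ᵥ c → s = t := by
    intro s t hst
    by_contra hne
    rcases lt_or_gt_of_ne hne with h | h
    · exact hper ⟨t - s, sub_pos.mpr h, key s t hst⟩
    · exact hper ⟨s - t, sub_pos.mpr h, key t s hst.symm⟩
  have hcL : c ∈ L := ⟨0, zero_vadd _ _⟩
  -- g₀ stabilizes L
  have hg₀S : g₀ ∈ MulAction.stabilizer G L := by
    rw [MulAction.mem_stabilizer_iff]
    ext x
    constructor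
    · rintro ⟨_, ⟨t, rfl⟩, rfl⟩
      exact ⟨t + t₀, by show (t + t₀) +ᵥ c = g₀ • (t +ᵥ c); rw [add_vadd, hg₀, hcomm]⟩
    · rintro ⟨t, rfl⟩
      refine ⟨(t - t₀) +ᵥ c, ⟨t - t₀, rfl⟩, ?_⟩
      show g₀ • ((t - t₀) +ᵥ c) = t +ᵥ c
      rw [← hcomm, ← hg₀, ← add_vadd]
      congr 1; ring
  set S := MulAction.stabilizer G L with hSdef
  have hmemL : ∀ g : S, ∃ t : ℝ, t +ᵥ c = (g : G) • c := by
    intro g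
    have h : (g : G) • c ∈ (g : G) • L := Set.smul_mem_smul_set hcL
    rw [MulAction.mem_stabilizer_iff.mp g.2] at h
    exact h
  choose τ hτ using hmemL
  have hadd : ∀ g h : S, τ (g * h) = τ g + τ h := by
    intro g h
    apply hinj
    rw [hτ]
    calc ((g * h : S) : G) • c = (g : G) • ((h : G) • c) := mul_smul _ _ _
      _ = (g : G) • (τ h +ᵥ c) := by rw [hτ]
      _ = τ h +ᵥ ((g : G) • c) := (hcomm _ _ _).symm
      _ = τ h +ᵥ (τ g +ᵥ c) := by rw [hτ]
      _ = (τ g + τ h) +ᵥ c := by rw [← add_vadd]; congr 1; ring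
  have hone : τ 1 = 0 := by
    apply hinj
    rw [hτ, zero_vadd]
    simp
  have hτnat : ∀ (g : S) (n : ℕ), τ (g ^ n) = n * τ g := by
    intro g n
    induction n with
    | zero => simp [hone]
    | succ n ih => rw [pow_succ, hadd, ih]; push_cast; ring
  have hτz : ∀ (g : S) (n : ℤ), τ (g ^ n) = n * τ g := by
    intro g n
    have hinv : ∀ h : S, τ h⁻¹ = -τ h := by
      intro h
      have := hadd h⁻¹ h
      rw [inv_mul_cancel, hone] at this
      linarith
    cases n with
    | ofNat m => rw [Int.ofNat_eq_coe, zpow_natCast, hτnat]; push_cast; ring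
    | negSucc m =>
      rw [zpow_negSucc, hinv, hτnat]
      push_cast; ring
  -- properness: bounded translation lengths give finitely many elements
  have hfin : ∀ R : ℝ, 0 ≤ R → {g : S | |τ g| ≤ R}.Finite := by
    intro R hR
    set K : Set X := (fun t : ℝ => t +ᵥ c) '' Set.Icc (-R) R with hK
    have hcont : Continuous fun t : ℝ => t +ᵥ c :=
      hflowcont.comp (continuous_id.prodMk continuous_const)
    have hKc : IsCompact K := (isCompact_Icc).image hcont
    have hcK : c ∈ K := ⟨0, ⟨neg_nonpos.mpr hR, hR⟩, zero_vadd _ _⟩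
    apply Set.Finite.subset ((hproper K hKc).preimage Subtype.val_injective.injOn)
    intro g hg
    refine ⟨(g : G) • c, ⟨τ g, ⟨(abs_le.mp hg).1, (abs_le.mp hg).2⟩, hτ g⟩,
      Set.smul_mem_smul_set hcK⟩
  -- the element g₀ in S and its translation length
  set G₀ : S := ⟨g₀, hg₀S⟩ with hG₀
  have hτG₀ : τ G₀ = t₀ := by
    apply hinj
    rw [hτ]
    exact hg₀.symm
  -- find minimal positive translation length
  have hfinset : {g : S | 0 < τ g ∧ τ g ≤ t₀}.Finite := by
    apply (hfin t₀ ht₀pos.le).subset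
    rintro g ⟨h1, h2⟩
    simp only [Set.mem_setOf_eq, abs_le]
    exact ⟨by linarith, h2⟩
  have hne : {g : S | 0 < τ g ∧ τ g ≤ t₀}.Nonempty := ⟨G₀, by simp only [Set.mem_setOf_eq, hτG₀]; exact ⟨ht₀pos, le_refl _⟩⟩
  obtain ⟨gm, ⟨hgm_pos, hgm_le⟩, hmin⟩ := Set.exists_min_image _ τ hfinset hne
  set a : ℝ := τ gm with ha
  have ha_pos : 0 < a := hgm_pos
  have hmin' : ∀ g : S, 0 < τ g → a ≤ τ g := by
    intro g hg
    by_cases h : τ g ≤ t₀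
    · exact hmin g ⟨hg, h⟩
    · linarith [hgm_le]
  -- every translation length is an integer multiple of a
  have hmult : ∀ g : S, ∃ n : ℤ, τ g = n * a := by
    intro g
    set n : ℤ := ⌊τ g / a⌋ with hn
    have h1 : (n : ℝ) * a ≤ τ g := by
      have := Int.floor_le (τ g / a)
      calc (n : ℝ) * a ≤ (τ g / a) * a := by
            exact mul_le_mul_of_nonneg_right this ha_pos.le
        _ = τ g := div_mul_cancel₀ _ ha_pos.ne'
    have h2 : τ g < (n + 1 : ℝ) * a := by
      have := Int.lt_floor_add_one (τ g / a)
      calc τ g = (τ g / a) * a := (div_mul_cancel₀ _ ha_pos.ne').symm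
        _ < (n + 1 : ℝ) * a := by
            exact mul_lt_mul_of_pos_right (by exact_mod_cast this) ha_pos
    have hτg' : τ (g * gm ^ (-n)) = τ g - n * a := by
      rw [hadd, hτz]; push_cast; ring
    by_cases h : τ (g * gm ^ (-n)) = 0
    · refine ⟨n, ?_⟩
      rw [hτg'] at h; linarith
    · exfalso
      have hpos : 0 < τ (g * gm ^ (-n)) := by
        rcases lt_or_eq_of_le (by rw [hτg']; linarith : (0:ℝ) ≤ τ (g * gm ^ (-n))) with h' | h'
        · exact h'
        · exact absurd h'.symm h
      have := hmin' _ hpos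
      rw [hτg'] at this
      linarith
  choose ν hν using hmult
  have hνadd : ∀ g h : S, ν (g * h) = ν g + ν h := by
    intro g h
    have : ((ν (g * h) : ℝ)) * a = ((ν g + ν h : ℤ) : ℝ) * a := by
      rw [← hν, hadd, hν g, hν h]; push_cast; ring
    exact_mod_cast mul_right_cancel₀ ha_pos.ne' this
  have hνone : ν 1 = 0 := by
    have : ((ν (1 : S) : ℝ)) * a = 0 := by rw [← hν, hone]
    have h0 : (ν (1 : S) : ℝ) = 0 := by
      rcases mul_eq_zero.mp this with h | h
      · exact h
      · exact absurd h ha_pos.ne'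
    exact_mod_cast h0
  refine ⟨{ toFun := fun g => Multiplicative.ofAdd (ν g),
            map_one' := by show Multiplicative.ofAdd (ν 1) = 1; rw [hνone]; rfl,
            map_mul' := by
              intro g h
              show Multiplicative.ofAdd (ν (g * h))
                = Multiplicative.ofAdd (ν g) * Multiplicative.ofAdd (ν h)
              rw [hνadd]; rfl }, ?_, ?_⟩
  · -- surjective
    intro x
    refine ⟨gm ^ (Multiplicative.toAdd x), ?_⟩
    have hval : ν (gm ^ (Multiplicative.toAdd x)) = Multiplicative.toAdd x := by
      have : ((ν (gm ^ (Multiplicative.toAdd x)) : ℝ)) * a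
          = ((Multiplicative.toAdd x : ℤ) : ℝ) * a := by
        rw [← hν, hτz]
      exact_mod_cast mul_right_cancel₀ ha_pos.ne' this
    show Multiplicative.ofAdd (ν (gm ^ (Multiplicative.toAdd x))) = x
    rw [hval]
    exact ofAdd_toAdd x
  · -- finite kernel
    apply (hfin t₀ ht₀pos.le).subset
    intro g hg
    have hg' : Multiplicative.ofAdd (ν g) = 1 := hg
    have hν0 : ν g = 0 := by
      have := congrArg Multiplicative.toAdd hg'
      simpa using this
    have : τ g = 0 := by rw [hν g, hν0]; push_cast; ring
    simp only [Set.mem_setOf_eq, this, abs_zero]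
    exact ht₀pos.le
end

section
/- Let X be a flow space for G, locally compact and second-countable, and γ > 0. The quotient Y_axes of the axes space X_axes by the flow is locally compact, Hausdorff, regular, second-countable, and hence metrizable. -/
/-!
If `t +ᵥ a = g • a` with `t ∈ (0, γ]` and `a` aperiodic, then `g` has infinite order, and any
flow time `s` decomposes as `s +ᵥ a = g ^ n • (r +ᵥ a)` with `r ∈ [0, t)`. For `a` in a compact
set `K`, proper discontinuity leaves finitely many such `g`, and for each of them finitely many
`n` for which `g ^ n` moves `[0, γ] +ᵥ K` into a given compact set `L`. So flow times from `K`
to `L` are bounded. This makes the axes locally closed (hence locally compact) and the orbit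
relation on them closed; since the quotient map is open, the quotient is locally compact,
Hausdorff and second countable, hence regular and metrizable.
-/

open Pointwise

/-- The quotient of a subset of a flow space by the flow (the ℝ-action). -/
abbrev flowQuotient {X : Type*} [TopologicalSpace X] [AddAction ℝ X] (A : Set X) :
    Type _ :=
  Quotient (Setoid.comap (Subtype.val : A → X) (AddAction.orbitRel ℝ X))

open Topology Set

lemma mem_closure_inter_of_mem_nhds {X : Type*} [TopologicalSpace X] {s N : Set X} {x : X}
    (hx : x ∈ closure s) (hN : N ∈ 𝓝 x) : x ∈ closure (s ∩ N) := by
  rw [mem_closure_iff_nhdsWithin_neBot] at hx ⊢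
  rwa [← nhdsWithin_restrict' s hN]

lemma isClosed_setOf_exists_mem_of_isCompact {α β : Type*} [TopologicalSpace α]
    [TopologicalSpace β] {K : Set α} (hK : IsCompact K) {p : α → β → Prop}
    (hp : IsClosed {q : α × β | p q.1 q.2}) : IsClosed {y | ∃ x ∈ K, p x y} := by
  have : CompactSpace K := isCompact_iff_compactSpace.mp hK
  convert isClosedMap_snd_of_compactSpace (X := K) _
    (hp.preimage (continuous_subtype_val.prodMap continuous_id)) using 1
  ext y
  simp [and_comm]

lemma exists_period_mem_Icc {X : Type*} [AddAction ℝ X] {x : X} {C p : ℝ} (hp : p ∈ Ioc 0 C)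
    (hpx : p +ᵥ x = x) : ∃ q ∈ Icc (C / 2) C, q +ᵥ x = x := by
  obtain ⟨hp0, hpC⟩ := hp
  set k := ⌊C / p⌋₊
  have hk : (k : ℝ) ≤ C / p := Nat.floor_le (div_nonneg (hp0.le.trans hpC) hp0.le)
  have hk' : C / p < k + 1 := Nat.lt_floor_add_one _
  have hk1 : 1 ≤ k := Nat.le_floor (by simpa using (one_le_div hp0).2 hpC)
  rw [le_div_iff₀ hp0] at hk
  rw [div_lt_iff₀ hp0] at hk'
  have hk1' : (1 : ℝ) ≤ k := by exact_mod_cast hk1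
  refine ⟨k * p, ⟨by nlinarith, hk⟩, ?_⟩
  rw [← nsmul_eq_mul]
  exact (AddAction.stabilizer ℝ x).nsmul_mem hpx k

section Flow

variable {X : Type*} [TopologicalSpace X] [AddAction ℝ X]

lemma isClosed_setOf_exists_vadd_eq [T2Space X] [ContinuousVAdd ℝ X] {T : Set ℝ}
    (hT : IsCompact T) {f : X → X} (hf : Continuous f) : IsClosed {x | ∃ t ∈ T, t +ᵥ x = f x} :=
  isClosed_setOf_exists_mem_of_isCompact hT (isClosed_eq continuous_vadd (hf.comp continuous_snd))

lemma isClosed_setOf_period_le [T2Space X] [ContinuousVAdd ℝ X] (C : ℝ) :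
    IsClosed {x : X | ∃ p ∈ Ioc 0 C, p +ᵥ x = x} := by
  rcases le_or_gt C 0 with hC | hC
  · convert isClosed_empty
    ext x
    simp only [mem_ofPred_eq, mem_empty_iff_false, iff_false]
    rintro ⟨p, hp, -⟩
    exact (hp.1.trans_le hp.2).not_ge hC
  · convert isClosed_setOf_exists_vadd_eq (isCompact_Icc (a := C / 2) (b := C))
      (continuous_id (X := X)) using 1
    ext x
    refine ⟨fun ⟨p, hp, hpx⟩ => exists_period_mem_Icc hp hpx,
      fun ⟨p, hp, hpx⟩ => ⟨p, ⟨?_, hp.2⟩, hpx⟩⟩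
    linarith [hp.1]

lemma isOpenQuotientMap_flowQuotient_mk [ContinuousConstVAdd ℝ X] {A : Set X}
    (hA : ∀ s : ℝ, ∀ x ∈ A, s +ᵥ x ∈ A) :
    IsOpenQuotientMap (Quotient.mk _ : A → flowQuotient A) := by
  refine ⟨Quotient.mk_surjective, continuous_quot_mk, fun U hU => ?_⟩
  let flow (s : ℝ) : A → A := fun x => ⟨s +ᵥ (x : X), hA s x x.2⟩
  have hpre : (Quotient.mk _ : A → flowQuotient A) ⁻¹' (Quotient.mk _ '' U) =
      ⋃ s : ℝ, flow s ⁻¹' U := by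
    ext x
    simp only [mem_preimage, mem_image, mem_iUnion, Quotient.eq, Setoid.comap_rel,
      AddAction.orbitRel_apply, AddAction.mem_orbit_iff]
    constructor
    · rintro ⟨y, hy, s, hs⟩
      exact ⟨s, by convert hy; exact Subtype.ext hs⟩
    · rintro ⟨s, hs⟩
      exact ⟨_, hs, s, rfl⟩
  change IsOpen ((Quotient.mk _ : A → flowQuotient A) ⁻¹' _)
  rw [hpre]
  exact isOpen_iUnion fun s =>
    hU.preimage (((continuous_const_vadd s).comp continuous_subtype_val).subtype_mk _)

end Flow

def flowAxes (G : Type*) {X : Type*} [SMul G X] [AddAction ℝ X] (γ : ℝ) : Set X :=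
  {x | (¬ ∃ t : ℝ, 0 < t ∧ t +ᵥ x = x) ∧ ∃ g : G, ∃ t : ℝ, 0 < t ∧ t ≤ γ ∧ t +ᵥ x = g • x}

lemma isOfFinOrder_of_smul_eq_self {G X : Type*} [Group G] [MulAction G X] [TopologicalSpace X]
    [ProperlyDiscontinuousSMul G X]
    {g : G} {x : X} (h : g • x = x) : IsOfFinOrder g := by
  by_contra hg
  refine infinite_range_of_injective (injective_zpow_iff_not_isOfFinOrder.2 hg)
    ((ProperlyDiscontinuousSMul.finite_stabilizer' G x).subset ?_)
  rintro _ ⟨n, rfl⟩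
  exact (MulAction.stabilizer G x).zpow_mem h n

section GroupFlow

variable {G X : Type*} [Group G] [MulAction G X] [AddAction ℝ X]

lemma vadd_eq_zpow_smul (hcomm : ∀ (g : G) (t : ℝ) (x : X), t +ᵥ g • x = g • (t +ᵥ x))
    {g : G} {t : ℝ} {x : X} (h : t +ᵥ x = g • x) (n : ℤ) : (n * t) +ᵥ x = g ^ n • x := by
  have hneg : -t +ᵥ x = g⁻¹ • x := by
    rw [eq_inv_smul_iff, ← hcomm, ← h, neg_vadd_vadd]
  induction n using Int.induction_on with
  | zero => simp
  | succ n ih => rw [Int.cast_add, Int.cast_one, add_one_mul, add_comm, add_vadd, ih, hcomm, h,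
      zpow_add_one, mul_smul]
  | pred n ih => rw [Int.cast_sub, Int.cast_one, sub_one_mul, sub_eq_neg_add, add_vadd, ih, hcomm,
      hneg, zpow_sub_one, mul_smul]

lemma exists_zpow_smul_vadd (hcomm : ∀ (g : G) (t : ℝ) (x : X), t +ᵥ g • x = g • (t +ᵥ x))
    {g : G} {t : ℝ} {x : X} (ht : 0 < t) (h : t +ᵥ x = g • x) (s : ℝ) :
    ∃ n : ℤ, ∃ r ∈ Ico 0 t, s = n * t + r ∧ s +ᵥ x = g ^ n • (r +ᵥ x) := by
  set n := toIcoDiv ht 0 s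
  have hr := sub_toIcoDiv_zsmul_mem_Ico ht 0 s
  rw [zero_add, zsmul_eq_mul] at hr
  refine ⟨n, s - n * t, hr, by ring, ?_⟩
  rw [← hcomm, ← vadd_eq_zpow_smul hcomm h, ← add_vadd, sub_add_cancel]

lemma not_isOfFinOrder_of_vadd_eq_smul
    (hcomm : ∀ (g : G) (t : ℝ) (x : X), t +ᵥ g • x = g • (t +ᵥ x))
    {g : G} {t : ℝ} {x : X} (hx : ¬ ∃ s : ℝ, 0 < s ∧ s +ᵥ x = x) (ht : 0 < t)
    (h : t +ᵥ x = g • x) : ¬IsOfFinOrder g := by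
  intro hg
  obtain ⟨n, hn, hgn⟩ := isOfFinOrder_iff_pow_eq_one.1 hg
  refine hx ⟨n * t, by positivity, ?_⟩
  simpa [hgn] using vadd_eq_zpow_smul hcomm h n

lemma vadd_mem_flowAxes (hcomm : ∀ (g : G) (t : ℝ) (x : X), t +ᵥ g • x = g • (t +ᵥ x))
    {γ : ℝ} {x : X} (hx : x ∈ flowAxes G γ) (s : ℝ) : s +ᵥ x ∈ flowAxes G γ := by
  obtain ⟨hnp, g, t, ht, htγ, h⟩ := hx
  refine ⟨fun ⟨p, hp, hpx⟩ => hnp ⟨p, hp, ?_⟩, g, t, ht, htγ, ?_⟩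
  · rwa [vadd_comm, vadd_left_cancel_iff] at hpx
  · rw [vadd_comm, h, hcomm]

variable [TopologicalSpace X] [ContinuousVAdd ℝ X] [ProperlyDiscontinuousSMul G X]

lemma exists_abs_le_of_vadd_mem (hcomm : ∀ (g : G) (t : ℝ) (x : X), t +ᵥ g • x = g • (t +ᵥ x))
    (γ : ℝ) {K L : Set X} (hK : IsCompact K) (hL : IsCompact L) :
    ∃ C : ℝ, ∀ x ∈ K, ∀ g : G, ¬IsOfFinOrder g → ∀ t : ℝ, 0 < t → t ≤ γ → t +ᵥ x = g • x →
      ∀ s : ℝ, s +ᵥ x ∈ L → |s| ≤ C := by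
  set M := Icc 0 γ +ᵥ K
  have hM : IsCompact M := isCompact_Icc.vadd_set hK
  have hF : {g : G | ¬IsOfFinOrder g ∧ ((g • ·) '' K ∩ M).Nonempty}.Finite :=
    (ProperlyDiscontinuousSMul.finite_disjoint_inter_image hK hM).subset fun g hg => hg.2
  have hZ : (⋃ g ∈ {g : G | ¬IsOfFinOrder g ∧ ((g • ·) '' K ∩ M).Nonempty},
      (fun n : ℤ => g ^ n) ⁻¹' {h : G | ((h • ·) '' M ∩ L).Nonempty}).Finite :=
    hF.biUnion fun g hg => (ProperlyDiscontinuousSMul.finite_disjoint_inter_image hM hL).preimage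
      (injective_zpow_iff_not_isOfFinOrder.2 hg.1).injOn
  obtain ⟨N, hN⟩ := (hZ.image abs).bddAbove
  refine ⟨(N + 1) * γ, fun x hx g hg t ht htγ h s hs => ?_⟩
  obtain ⟨n, r, hr, rfl, hsx⟩ := exists_zpow_smul_vadd hcomm ht h s
  have hgM : g • x ∈ M := h ▸ vadd_mem_vadd ⟨ht.le, htγ⟩ hx
  have hrM : r +ᵥ x ∈ M := vadd_mem_vadd ⟨hr.1, hr.2.le.trans htγ⟩ hx
  have hgF : g ∈ {g : G | ¬IsOfFinOrder g ∧ ((g • ·) '' K ∩ M).Nonempty} :=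
    ⟨hg, g • x, mem_image_of_mem _ hx, hgM⟩
  have hnF : g ^ n ∈ {h : G | ((h • ·) '' M ∩ L).Nonempty} :=
    ⟨_, mem_image_of_mem _ hrM, by rwa [← hsx]⟩
  have hn : |n| ≤ N := hN ⟨n, mem_biUnion hgF hnF, rfl⟩
  have hn' : |(n : ℝ)| ≤ N := by exact_mod_cast hn
  calc |(n : ℝ) * t + r| ≤ |(n : ℝ) * t| + |r| := abs_add_le _ _
    _ = |(n : ℝ)| * t + r := by rw [abs_mul, abs_of_pos ht, abs_of_nonneg hr.1]
    _ ≤ N * γ + γ :=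
        add_le_add (mul_le_mul hn' htγ ht.le ((abs_nonneg _).trans hn')) (hr.2.le.trans htγ)
    _ = (N + 1) * γ := by ring

lemma exists_abs_le_of_vadd_mem_of_subset_flowAxes
    (hcomm : ∀ (g : G) (t : ℝ) (x : X), t +ᵥ g • x = g • (t +ᵥ x)) {γ : ℝ} {K L : Set X}
    (hK : IsCompact K) (hKA : K ⊆ flowAxes G γ) (hL : IsCompact L) :
    ∃ C : ℝ, ∀ x ∈ K, ∀ s : ℝ, s +ᵥ x ∈ L → |s| ≤ C := by
  obtain ⟨C, hC⟩ := exists_abs_le_of_vadd_mem hcomm γ hK hL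
  refine ⟨C, fun x hx => ?_⟩
  obtain ⟨hnp, g, t, ht, htγ, h⟩ := hKA hx
  exact hC x hx g (not_isOfFinOrder_of_vadd_eq_smul hcomm hnp ht h) t ht htγ h

end GroupFlow

section Axes

variable {G X : Type*} [Group G] [MulAction G X] [AddAction ℝ X] [TopologicalSpace X]
  [T2Space X] [LocallyCompactSpace X] [ContinuousConstSMul G X] [ProperlyDiscontinuousSMul G X]
  [ContinuousVAdd ℝ X]

lemma closure_flowAxes_subset (hcomm : ∀ (g : G) (t : ℝ) (x : X), t +ᵥ g • x = g • (t +ᵥ x))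
    (γ : ℝ) : closure (flowAxes G γ) ⊆
      {x : X | ∃ g : G, ¬IsOfFinOrder g ∧ ∃ t : ℝ, 0 < t ∧ t ≤ γ ∧ t +ᵥ x = g • x} := by
  intro y hy
  obtain ⟨K, hK, hKy⟩ := exists_compact_mem_nhds y
  set F := {g : G | ¬IsOfFinOrder g ∧ ((g • ·) '' K ∩ (Icc 0 γ +ᵥ K)).Nonempty}
  have hF : F.Finite := (ProperlyDiscontinuousSMul.finite_disjoint_inter_image hK
    (isCompact_Icc.vadd_set hK)).subset fun g hg => hg.2
  have hsub : flowAxes G γ ∩ K ⊆ ⋃ g ∈ F, {x : X | ∃ t ∈ Icc 0 γ, t +ᵥ x = g • x} := by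
    rintro x ⟨⟨hnp, g, t, ht, htγ, h⟩, hxK⟩
    refine mem_biUnion (x := g) ⟨not_isOfFinOrder_of_vadd_eq_smul hcomm hnp ht h, g • x,
      mem_image_of_mem _ hxK, h ▸ vadd_mem_vadd ⟨ht.le, htγ⟩ hxK⟩ ⟨t, ⟨ht.le, htγ⟩, h⟩
  have hclosed : IsClosed (⋃ g ∈ F, {x : X | ∃ t ∈ Icc 0 γ, t +ᵥ x = g • x}) :=
    hF.isClosed_biUnion fun g _ => isClosed_setOf_exists_vadd_eq isCompact_Icc
      (continuous_const_smul g)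
  obtain ⟨g, ⟨hg, -⟩, t, ht, h⟩ :=
    mem_iUnion₂.1 (hclosed.closure_subset_iff.2 hsub (mem_closure_inter_of_mem_nhds hy hKy))
  refine ⟨g, hg, t, ht.1.lt_of_ne ?_, ht.2, h⟩
  rintro rfl
  exact hg (isOfFinOrder_of_smul_eq_self (by rw [← h, zero_vadd]))

lemma isLocallyClosed_flowAxes (hcomm : ∀ (g : G) (t : ℝ) (x : X), t +ᵥ g • x = g • (t +ᵥ x))
    (γ : ℝ) : IsLocallyClosed (flowAxes (X := X) G γ) := by
  refine ((isLocallyClosed_tfae _).out 0 3).mpr fun x hx => ?_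
  obtain ⟨K, hK, hKx⟩ := exists_compact_mem_nhds x
  obtain ⟨C, hC⟩ := exists_abs_le_of_vadd_mem hcomm γ hK hK
  -- Near `x`, a periodic point of the closure has a period at most `C`; such points form a
  -- closed set that misses the aperiodic point `x`.
  refine ⟨interior K \ {y : X | ∃ p ∈ Ioc 0 C, p +ᵥ y = y},
    ⟨mem_interior_iff_mem_nhds.2 hKx, fun ⟨p, hp, h⟩ => hx.1 ⟨p, hp.1, h⟩⟩,
    isOpen_interior.sdiff (isClosed_setOf_period_le C), ?_⟩
  rintro y ⟨⟨hyK, hyP⟩, hy⟩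
  obtain ⟨g, hg, t, ht, htγ, h⟩ := closure_flowAxes_subset hcomm γ hy
  refine ⟨fun ⟨p, hp, hpy⟩ => hyP ⟨p, ⟨hp, ?_⟩, hpy⟩, g, t, ht, htγ, h⟩
  have hyK' := interior_subset hyK
  exact (le_abs_self p).trans (hC y hyK' g hg t ht htγ h p (by rwa [hpy]))

lemma isClosed_setOf_vadd_eq_flowAxes
    (hcomm : ∀ (g : G) (t : ℝ) (x : X), t +ᵥ g • x = g • (t +ᵥ x)) (γ : ℝ) :
    IsClosed {q : flowAxes (X := X) G γ × flowAxes (X := X) G γ |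
      ∃ s : ℝ, s +ᵥ (q.2 : X) = (q.1 : X)} := by
  have := (isLocallyClosed_flowAxes hcomm γ).locallyCompactSpace
  refine isClosed_of_closure_subset fun q hq => ?_
  obtain ⟨Ku, hKu, hKu_mem⟩ := exists_compact_mem_nhds q.1
  obtain ⟨Kv, hKv, hKv_mem⟩ := exists_compact_mem_nhds q.2
  have hKv' : IsCompact (Subtype.val '' Kv) := hKv.image continuous_subtype_val
  obtain ⟨C, hC⟩ := exists_abs_le_of_vadd_mem_of_subset_flowAxes hcomm hKv'
    (Subtype.coe_image_subset _ _) (hKu.image continuous_subtype_val)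
  -- Over `Ku ×ˢ Kv` the relation only uses flow times in `[-C, C]`, so there it is compact.
  set T := (fun p : ℝ × X => (p.1 +ᵥ p.2, p.2)) '' (Icc (-C) C ×ˢ (Subtype.val '' Kv))
  have hT : IsClosed (Prod.map Subtype.val Subtype.val ⁻¹' T :
      Set (flowAxes (X := X) G γ × flowAxes (X := X) G γ)) :=
    ((isCompact_Icc.prod hKv').image (by fun_prop)).isClosed.preimage
      (continuous_subtype_val.prodMap continuous_subtype_val)
  have hsub : {q : flowAxes (X := X) G γ × flowAxes (X := X) G γ |
      ∃ s : ℝ, s +ᵥ (q.2 : X) = (q.1 : X)} ∩ Ku ×ˢ Kv ⊆ Prod.map Subtype.val Subtype.val ⁻¹' T := by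
    rintro ⟨u, v⟩ ⟨⟨s, hs⟩, hu, hv⟩
    refine ⟨(s, v), ⟨abs_le.1 (hC v (mem_image_of_mem _ hv) s ?_), mem_image_of_mem _ hv⟩, ?_⟩
    · rw [hs]; exact mem_image_of_mem _ hu
    · simp [hs]
  obtain ⟨⟨s, v⟩, -, hsv⟩ := hT.closure_subset_iff.2 hsub
    (mem_closure_inter_of_mem_nhds hq (prod_mem_nhds hKu_mem hKv_mem))
  simp only [Prod.map, Prod.mk.injEq] at hsv
  exact ⟨s, by rw [← hsv.1, hsv.2]⟩

end Axes

lemma properlyDiscontinuousSMul_of_finite_inter_smul {G X : Type*} [Group G] [MulAction G X]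
    [TopologicalSpace X]
    (h : ∀ K : Set X, IsCompact K → {g : G | (K ∩ g • K).Nonempty}.Finite) :
    ProperlyDiscontinuousSMul G X where
  finite_disjoint_inter_image {K L} hK hL := by
    refine (h _ (hK.union hL)).subset ?_
    rintro g ⟨_, ⟨x, hx, rfl⟩, hxL⟩
    exact ⟨g • x, Or.inr hxL, smul_mem_smul_set (Or.inl hx)⟩

theorem stmt13_general {G X : Type*} [Group G] [MetricSpace X] [MulAction G X] [AddAction ℝ X]
    [SecondCountableTopology X] [LocallyCompactSpace X]
    (hiso : ∀ g : G, Isometry (fun x : X => g • x))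
    (hproper : ∀ K : Set X, IsCompact K → {g : G | (K ∩ g • K).Nonempty}.Finite)
    (hflowcont : Continuous fun p : ℝ × X => p.1 +ᵥ p.2)
    (hcomm : ∀ (g : G) (t : ℝ) (x : X), t +ᵥ (g • x) = g • (t +ᵥ x))
    (γ : ℝ)
    (Xaxes : Set X)
    (hXaxes : Xaxes = {x : X | (¬ ∃ t : ℝ, 0 < t ∧ t +ᵥ x = x) ∧
      ∃ g : G, ∃ t : ℝ, 0 < t ∧ t ≤ γ ∧ t +ᵥ x = g • x}) :
    LocallyCompactSpace (flowQuotient Xaxes) ∧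
      T2Space (flowQuotient Xaxes) ∧
      RegularSpace (flowQuotient Xaxes) ∧
      SecondCountableTopology (flowQuotient Xaxes) ∧
      TopologicalSpace.MetrizableSpace (flowQuotient Xaxes) := by
  obtain rfl : Xaxes = flowAxes G γ := hXaxes
  have : ContinuousConstSMul G X := ⟨fun g => (hiso g).continuous⟩
  have : ContinuousVAdd ℝ X := ⟨hflowcont⟩
  have := properlyDiscontinuousSMul_of_finite_inter_smul hproper
  have hπ := isOpenQuotientMap_flowQuotient_mk (A := flowAxes G γ) fun s x hx =>
    vadd_mem_flowAxes hcomm hx s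
  have := (isLocallyClosed_flowAxes hcomm γ).locallyCompactSpace
  have := hπ.locallyCompactSpace
  have := (t2Space_iff_of_isOpenQuotientMap hπ).2 <| by
    simpa only [Quotient.eq, Setoid.comap_rel, AddAction.orbitRel_apply,
      AddAction.mem_orbit_iff] using isClosed_setOf_vadd_eq_flowAxes hcomm γ
  have := TopologicalSpace.Quotient.secondCountableTopology hπ.isOpenMap
  exact ⟨inferInstance, inferInstance, inferInstance, inferInstance, inferInstance⟩

theorem stmt13 {G X : Type*} [Group G] [MetricSpace X] [MulAction G X] [AddAction ℝ X]
    [SecondCountableTopology X] [LocallyCompactSpace X]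
    (hiso : ∀ g : G, Isometry (fun x : X => g • x))
    (hproper : ∀ K : Set X, IsCompact K → {g : G | (K ∩ g • K).Nonempty}.Finite)
    (hflowcont : Continuous fun p : ℝ × X => p.1 +ᵥ p.2)
    (hcomm : ∀ (g : G) (t : ℝ) (x : X), t +ᵥ (g • x) = g • (t +ᵥ x))
    (γ : ℝ) (hγ : 0 < γ)
    (Xaxes : Set X)
    (hXaxes : Xaxes = {x : X | (¬ ∃ t : ℝ, 0 < t ∧ t +ᵥ x = x) ∧
      ∃ g : G, ∃ t : ℝ, 0 < t ∧ t ≤ γ ∧ t +ᵥ x = g • x}) :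
    LocallyCompactSpace (flowQuotient Xaxes) ∧
      T2Space (flowQuotient Xaxes) ∧
      RegularSpace (flowQuotient Xaxes) ∧
      SecondCountableTopology (flowQuotient Xaxes) ∧
      TopologicalSpace.MetrizableSpace (flowQuotient Xaxes) :=
  stmt13_general hiso hproper hflowcont hcomm γ Xaxes hXaxes
end

section
/- Let X be a flow space for G and γ > 0 such that every point of X has G-period at most γ. Let ℱ be a family of subgroups, let c ∈ X, and let U be an open ℱ-neighborhood of the flow line Φ_ℝ(c). Then there exists an open ℱ-neighborhood V ⊆ U of Φ_ℝ(c) that is invariant under the flow. (Concretely, V = U \ Φ_ℝ(X \ GU) works, using Φ_ℝ C = Φ_{[0,γ]} C for G-invariant closed C.) -/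
/-!
Let `W = G • U`. Because every orbit is `G`-periodic with period at most `γ`, a point whose flow
line meets the complement of the `G`-invariant set `W` already does so at some time in `[0, γ]`;
hence `P = {x | Φ_ℝ x ⊆ W}` is open by the tube lemma, and it is `G`- and flow-invariant.
Take `V = U ∩ P`. A flow line lying in `W` is connected, and `W` is the disjoint union of the
distinct open translates of `U`, so a flow line through a point of `U` stays inside `U`.
This makes `V` flow-invariant, and `V` inherits the `ℱ`-subset property from `U`.
-/

open Pointwise Set

section Translates

variable {G X : Type*} [Group G] [MulAction G X]

theorem smul_mem_iUnion_smul_iff (U : Set X) (g : G) (y : X) :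
    g • y ∈ ⋃ h : G, h • U ↔ y ∈ ⋃ h : G, h • U := by
  simp only [mem_iUnion, mem_smul_set_iff_inv_smul_mem]
  constructor
  · rintro ⟨h, hh⟩
    exact ⟨g⁻¹ * h, by rwa [mul_inv_rev, inv_inv, mul_smul]⟩
  · rintro ⟨h, hh⟩
    exact ⟨g * h, by rwa [mul_inv_rev, mul_smul, inv_smul_smul]⟩

theorem smul_inter_eq_of_nonempty {U P : Set X}
    (hU : ∀ g : G, (g • U ∩ U).Nonempty → g • U = U) (hP : ∀ (g : G) (y : X), g • y ∈ P ↔ y ∈ P)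
    (g : G) (h : (g • (U ∩ P) ∩ (U ∩ P)).Nonempty) : g • (U ∩ P) = U ∩ P := by
  have hgP : g • P = P := by
    ext y
    rw [mem_smul_set_iff_inv_smul_mem, hP]
  rw [smul_set_inter, hgP] at h ⊢
  rw [hU g (h.mono (inter_subset_inter inter_subset_left inter_subset_left))]

theorem stabilizer_le_stabilizer_of_subset {U V : Set X}
    (hU : ∀ g : G, (g • U ∩ U).Nonempty → g • U = U) (hVU : V ⊆ U) (hV : V.Nonempty) :
    MulAction.stabilizer G V ≤ MulAction.stabilizer G U := by
  intro g hg
  obtain ⟨x, hx⟩ := hV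
  have hgx : g • x ∈ V := (MulAction.mem_stabilizer_iff.1 hg) ▸ smul_mem_smul_set hx
  exact hU g ⟨g • x, smul_mem_smul_set (hVU hx), hVU hgx⟩

/-- The translates of `U` that differ from `U` are disjoint from it, so together with `U` they form
an open partition of `⋃ g, g • U`. -/
theorem IsPreconnected.subset_of_subset_iUnion_smul [TopologicalSpace X] [ContinuousConstSMul G X]
    {U S : Set X} (hUo : IsOpen U) (hU : ∀ g : G, (g • U ∩ U).Nonempty → g • U = U)
    (hS : IsPreconnected S) (hSW : S ⊆ ⋃ g : G, g • U) (hSU : (S ∩ U).Nonempty) : S ⊆ U := by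
  refine hS.subset_left_of_subset_union (v := ⋃ g ∈ {g : G | g • U ≠ U}, g • U) hUo
    (isOpen_biUnion fun g _ => hUo.smul g) ?_ ?_ hSU
  · rw [disjoint_left]
    intro y hyU hy
    obtain ⟨g, hg, hyg⟩ := mem_iUnion₂.1 hy
    exact hg (hU g ⟨y, hyg, hyU⟩)
  · intro y hy
    obtain ⟨g, hyg⟩ := mem_iUnion.1 (hSW hy)
    by_cases hg : g • U = U
    · exact Or.inl (hg ▸ hyg)
    · exact Or.inr (mem_biUnion hg hyg)

end Translates

section Flow

variable {G X : Type*} [Group G] [MulAction G X] [AddAction ℝ X]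

theorem forall_vadd_mem_of_forall_mem_Ico {W : Set X} (hW : ∀ (g : G) (y : X), g • y ∈ W ↔ y ∈ W)
    {x : X} {g : G} {p : ℝ} (hp : 0 < p) (hx : p +ᵥ x = g • x)
    (hcomm : ∀ t : ℝ, t +ᵥ g • x = g • (t +ᵥ x)) (hwin : ∀ s ∈ Ico 0 p, s +ᵥ x ∈ W) (t : ℝ) :
    t +ᵥ x ∈ W := by
  have hper : Function.Periodic (fun t : ℝ => t +ᵥ x ∈ W) p := fun t => by
    simp only [add_vadd, hx, hcomm, hW]
  obtain ⟨s, hs, hts⟩ := hper.exists_mem_Ico₀ hp t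
  exact hts ▸ hwin s hs

theorem forall_vadd_mem_of_forall_vadd_mem_iUnion_smul [TopologicalSpace X]
    [ContinuousConstSMul G X] [ContinuousVAdd ℝ X] {U : Set X} (hUo : IsOpen U)
    (hU : ∀ g : G, (g • U ∩ U).Nonempty → g • U = U) {x : X} (hx : x ∈ U)
    (hW : ∀ t : ℝ, t +ᵥ x ∈ ⋃ g : G, g • U) (t : ℝ) : t +ᵥ x ∈ U :=
  (isPreconnected_range (continuous_id.vadd continuous_const)).subset_of_subset_iUnion_smul hUo hU
    (range_subset_iff.2 hW) ⟨x, ⟨0, zero_vadd ℝ x⟩, hx⟩ ⟨t, rfl⟩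

end Flow

theorem isOpen_setOf_forall_vadd_mem {M X : Type*} [TopologicalSpace M] [TopologicalSpace X]
    [VAdd M X] [ContinuousVAdd M X] {K : Set M} (hK : IsCompact K) {W : Set X} (hW : IsOpen W) :
    IsOpen {x : X | ∀ s ∈ K, s +ᵥ x ∈ W} := by
  rw [isOpen_iff_eventually]
  intro x hx
  exact hK.eventually_forall_of_forall_eventually fun s hs =>
    (continuous_snd.vadd continuous_fst).continuousAt.preimage_mem_nhds (hW.mem_nhds (hx s hs))

theorem stmt14_general {G X : Type*} [Group G] [MetricSpace X] [MulAction G X] [AddAction ℝ X]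
    (hiso : ∀ g : G, Isometry (fun x : X => g • x))
    (hflowcont : Continuous fun p : ℝ × X => p.1 +ᵥ p.2)
    (hcomm : ∀ (g : G) (t : ℝ) (x : X), t +ᵥ (g • x) = g • (t +ᵥ x))
    (γ : ℝ)
    -- every point of X has G-period at most γ
    (hperiod : ∀ x : X, ∃ g : G, ∃ t : ℝ, 0 < t ∧ t ≤ γ ∧ t +ᵥ x = g • x)
    -- a family of subgroups: closed under conjugation and under subgroups
    (F : Set (Subgroup G))
    (hFsub : ∀ H ∈ F, ∀ H' : Subgroup G, H' ≤ H → H' ∈ F)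
    (c : X)
    -- U is an open F-neighborhood of the flow line through c
    (U : Set X) (hUopen : IsOpen U)
    (hUnbhd : (Set.range fun t : ℝ => t +ᵥ c) ⊆ U)
    (hUF : ∀ g : G, ((g • U) ∩ U).Nonempty → g • U = U)
    (hUstab : MulAction.stabilizer G U ∈ F) :
    ∃ V : Set X, IsOpen V ∧ V ⊆ U ∧
      (Set.range fun t : ℝ => t +ᵥ c) ⊆ V ∧
      (∀ (t : ℝ), ∀ x ∈ V, t +ᵥ x ∈ V) ∧
      (∀ g : G, ((g • V) ∩ V).Nonempty → g • V = V) ∧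
      MulAction.stabilizer G V ∈ F := by
  have : ContinuousVAdd ℝ X := ⟨hflowcont⟩
  have : ContinuousConstSMul G X := ⟨fun g => (hiso g).continuous⟩
  set W := ⋃ g : G, g • U
  set P := {x : X | ∀ t : ℝ, t +ᵥ x ∈ W}
  have hPG : ∀ (g : G) (y : X), g • y ∈ P ↔ y ∈ P := fun g y =>
    forall_congr' fun t => by rw [hcomm, smul_mem_iUnion_smul_iff]
  have hP_eq : P = {x | ∀ s ∈ Icc 0 γ, s +ᵥ x ∈ W} := by
    refine Subset.antisymm (fun x hx s _ => hx s) fun x hx => ?_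
    obtain ⟨g, p, hp, hpγ, hpx⟩ := hperiod x
    exact forall_vadd_mem_of_forall_mem_Ico (smul_mem_iUnion_smul_iff U) hp hpx
      (fun t => hcomm g t x) fun s hs => hx s ⟨hs.1, hs.2.le.trans hpγ⟩
  have hPopen : IsOpen P :=
    hP_eq ▸ isOpen_setOf_forall_vadd_mem isCompact_Icc (isOpen_iUnion fun g => hUopen.smul g)
  have hP_vadd : ∀ (t : ℝ) (x : X), x ∈ P → t +ᵥ x ∈ P := fun t x hx s => by
    rw [← add_vadd]
    exact hx (s + t)
  have hline : (range fun t : ℝ => t +ᵥ c) ⊆ U ∩ P := range_subset_iff.2 fun t =>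
    ⟨hUnbhd ⟨t, rfl⟩, fun s => mem_iUnion.2 ⟨1, by
      rw [one_smul, ← add_vadd]
      exact hUnbhd ⟨s + t, rfl⟩⟩⟩
  refine ⟨U ∩ P, hUopen.inter hPopen, inter_subset_left, hline,
    fun t x hx => ⟨forall_vadd_mem_of_forall_vadd_mem_iUnion_smul hUopen hUF hx.1 hx.2 t,
      hP_vadd t x hx.2⟩, smul_inter_eq_of_nonempty hUF hPG, ?_⟩
  exact hFsub _ hUstab _ (stabilizer_le_stabilizer_of_subset hUF inter_subset_left
    ⟨c, hline ⟨0, zero_vadd ℝ c⟩⟩)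

theorem stmt14 {G X : Type*} [Group G] [MetricSpace X] [MulAction G X] [AddAction ℝ X]
    (hiso : ∀ g : G, Isometry (fun x : X => g • x))
    (hproper : ∀ K : Set X, IsCompact K → {g : G | (K ∩ g • K).Nonempty}.Finite)
    (hflowcont : Continuous fun p : ℝ × X => p.1 +ᵥ p.2)
    (hcomm : ∀ (g : G) (t : ℝ) (x : X), t +ᵥ (g • x) = g • (t +ᵥ x))
    (γ : ℝ) (hγ : 0 < γ)
    -- every point of X has G-period at most γ
    (hperiod : ∀ x : X, ∃ g : G, ∃ t : ℝ, 0 < t ∧ t ≤ γ ∧ t +ᵥ x = g • x)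
    -- a family of subgroups: closed under conjugation and under subgroups
    (F : Set (Subgroup G))
    (hFconj : ∀ H ∈ F, ∀ g : G, Subgroup.map (MulAut.conj g).toMonoidHom H ∈ F)
    (hFsub : ∀ H ∈ F, ∀ H' : Subgroup G, H' ≤ H → H' ∈ F)
    (c : X)
    -- U is an open F-neighborhood of the flow line through c
    (U : Set X) (hUopen : IsOpen U)
    (hUnbhd : (Set.range fun t : ℝ => t +ᵥ c) ⊆ U)
    (hUF : ∀ g : G, ((g • U) ∩ U).Nonempty → g • U = U)
    (hUstab : MulAction.stabilizer G U ∈ F) :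
    ∃ V : Set X, IsOpen V ∧ V ⊆ U ∧
      (Set.range fun t : ℝ => t +ᵥ c) ⊆ V ∧
      (∀ (t : ℝ), ∀ x ∈ V, t +ᵥ x ∈ V) ∧
      (∀ g : G, ((g • V) ∩ V).Nonempty → g • V = V) ∧
      MulAction.stabilizer G V ∈ F :=
  stmt14_general hiso hflowcont hcomm γ hperiod F hFsub c U hUopen hUnbhd hUF hUstab
end

section
/- Let X be a flow space for G and γ > 0. The subspace X_cyc of all points on compact flow lines with G-period at most γ is closed in X. Here X_cyc = {x ∈ X | ∃ t > 0 : Φ_t(x) = x} ∩ X_{≤γ}, where X_{≤γ} is the set of points with G-period at most γ. -/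
/-!
Replacing a G-period `t ≤ γ` with group element `g` by `k t` with `g ^ k`, `k = ⌊γ / t⌋`, puts
it in `[γ/2, γ]`. For a sequence `uₙ → x` in the set, properness on the compact set swept out by
the flow over `[0, γ]` from `{x} ∪ {uₙ}` shows that only finitely many group elements `gₙ`
occur; for each `g` the condition `∃ s ∈ [γ/2, γ], Φ_s(y) = g • y` is closed, so
`Φ_s(x) = gₙ • x` for some `n`. Since `gₙ` moves the periodic point `uₙ` along its compact flow line,
properness makes `gₙ` of finite order `m`, and then `Φ_{ms}(x) = x`.
-/

open Pointwise Set Filter Topology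

section FlowSpace

variable {G X : Type*} [Group G] [MulAction G X] [AddAction ℝ X]

theorem natCast_mul_vadd_eq_pow_smul
    (hcomm : ∀ (g : G) (t : ℝ) (x : X), t +ᵥ (g • x) = g • (t +ᵥ x))
    {g : G} {t : ℝ} {x : X} (h : t +ᵥ x = g • x) (k : ℕ) :
    ((k : ℝ) * t) +ᵥ x = g ^ k • x := by
  induction k with
  | zero => simp
  | succ k ih =>
    rw [Nat.cast_succ, add_one_mul, add_comm, add_vadd, ih, hcomm, h, pow_succ, mul_smul]

theorem exists_vadd_eq_smul_mem_Icc_half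
    (hcomm : ∀ (g : G) (t : ℝ) (x : X), t +ᵥ (g • x) = g • (t +ᵥ x)) {γ : ℝ} {x : X}
    (h : ∃ g : G, ∃ t : ℝ, 0 < t ∧ t ≤ γ ∧ t +ᵥ x = g • x) :
    ∃ g : G, ∃ s ∈ Icc (γ / 2) γ, s +ᵥ x = g • x := by
  obtain ⟨g, t, ht, htγ, hx⟩ := h
  set k := ⌊γ / t⌋₊
  have hk : 1 ≤ (k : ℝ) := by
    exact_mod_cast Nat.le_floor (by rwa [Nat.cast_one, one_le_div ht])
  have hkγ : (k : ℝ) * t ≤ γ :=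
    (le_div_iff₀ ht).mp (Nat.floor_le (div_nonneg (ht.le.trans htγ) ht.le))
  have hγk : γ < (k + 1) * t := (div_lt_iff₀ ht).mp (Nat.lt_floor_add_one _)
  exact ⟨g ^ k, k * t, ⟨by nlinarith, hkγ⟩, natCast_mul_vadd_eq_pow_smul hcomm hx k⟩

variable [TopologicalSpace X]

theorem isOfFinOrder_of_vadd_eq_smul
    (hproper : ∀ K : Set X, IsCompact K → {g : G | (K ∩ g • K).Nonempty}.Finite)
    (hflowcont : Continuous fun p : ℝ × X => p.1 +ᵥ p.2)
    (hcomm : ∀ (g : G) (t : ℝ) (x : X), t +ᵥ (g • x) = g • (t +ᵥ x))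
    {x : X} {p t : ℝ} {g : G} (hp : 0 < p) (hpx : p +ᵥ x = x) (htx : t +ᵥ x = g • x) :
    IsOfFinOrder g := by
  set L := range fun r : ℝ => r +ᵥ x
  have hL : IsCompact L :=
    Function.Periodic.compact_of_continuous (fun r => by simp only [add_vadd, hpx]) hp.ne'
      (hflowcont.comp (Continuous.prodMk_left x))
  refine finite_powers.1 ((hproper L hL).subset ?_)
  rintro _ ⟨k, rfl⟩
  exact ⟨g ^ k • x, ⟨k * t, natCast_mul_vadd_eq_pow_smul hcomm htx k⟩,
    smul_mem_smul_set ⟨0, zero_vadd ℝ x⟩⟩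

theorem isClosed_setOf_exists_vadd_eq_smul [T2Space X]
    (hflowcont : Continuous fun p : ℝ × X => p.1 +ᵥ p.2)
    {g : G} (hg : Continuous fun x : X => g • x) {S : Set ℝ} (hS : IsCompact S) :
    IsClosed {x : X | ∃ s ∈ S, s +ᵥ x = g • x} := by
  have : CompactSpace S := isCompact_iff_compactSpace.mp hS
  have hclosed : IsClosed {q : S × X | (q.1 : ℝ) +ᵥ q.2 = g • q.2} :=
    isClosed_eq (hflowcont.comp (continuous_subtype_val.prodMap continuous_id))
      (hg.comp continuous_snd)
  convert isClosedMap_snd_of_compactSpace _ hclosed using 1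
  ext x
  simp

theorem finite_range_of_tendsto_of_vadd_eq_smul
    (hproper : ∀ K : Set X, IsCompact K → {g : G | (K ∩ g • K).Nonempty}.Finite)
    (hflowcont : Continuous fun p : ℝ × X => p.1 +ᵥ p.2)
    {u : ℕ → X} {x : X} (hux : Tendsto u atTop (𝓝 x)) {S : Set ℝ} (hS : IsCompact S)
    {s : ℕ → ℝ} {g : ℕ → G} (hs : ∀ n, s n ∈ S) (hsu : ∀ n, s n +ᵥ u n = g n • u n) :
    (range g).Finite := by
  set C := insert x (range u)
  set K := (fun q : ℝ × X => q.1 +ᵥ q.2) '' (insert 0 S ×ˢ C)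
  have hK : IsCompact K :=
    ((hS.insert 0).prod hux.isCompact_insert_range).image hflowcont
  refine (hproper K hK).subset ?_
  rintro _ ⟨n, rfl⟩
  have hmem : ∀ t ∈ insert 0 S, t +ᵥ u n ∈ K := fun t ht =>
    ⟨(t, u n), ⟨ht, Or.inr ⟨n, rfl⟩⟩, rfl⟩
  refine ⟨g n • u n, hsu n ▸ hmem _ (Or.inr (hs n)), smul_mem_smul_set ?_⟩
  simpa using hmem 0 (mem_insert 0 S)

end FlowSpace

theorem stmt15 {G X : Type*} [Group G] [MetricSpace X] [MulAction G X] [AddAction ℝ X]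
    (hiso : ∀ g : G, Isometry (fun x : X => g • x))
    (hproper : ∀ K : Set X, IsCompact K → {g : G | (K ∩ g • K).Nonempty}.Finite)
    (hflowcont : Continuous fun p : ℝ × X => p.1 +ᵥ p.2)
    (hcomm : ∀ (g : G) (t : ℝ) (x : X), t +ᵥ (g • x) = g • (t +ᵥ x))
    (γ : ℝ) (hγ : 0 < γ) :
    IsClosed ({x : X | ∃ t : ℝ, 0 < t ∧ t +ᵥ x = x} ∩
      {x : X | ∃ g : G, ∃ t : ℝ, 0 < t ∧ t ≤ γ ∧ t +ᵥ x = g • x}) := by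
  refine IsSeqClosed.isClosed fun u x hu hux => ?_
  choose p hp hpu using fun n => (hu n).1
  choose g s hs hsu using fun n => exists_vadd_eq_smul_mem_Icc_half hcomm (hu n).2
  have hfin := finite_range_of_tendsto_of_vadd_eq_smul hproper hflowcont hux isCompact_Icc hs hsu
  have hclosed : IsClosed (⋃ h ∈ range g, {y | ∃ t ∈ Icc (γ / 2) γ, t +ᵥ y = h • y}) :=
    hfin.isClosed_biUnion fun h _ =>
      isClosed_setOf_exists_vadd_eq_smul hflowcont (hiso h).continuous isCompact_Icc
  have hx := hclosed.mem_of_tendsto hux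
    (Eventually.of_forall fun n => mem_biUnion ⟨n, rfl⟩ ⟨s n, hs n, hsu n⟩)
  obtain ⟨_, ⟨n, rfl⟩, t, ht, htx⟩ := by simpa only [mem_iUnion, exists_prop] using hx
  obtain ⟨m, hm, hgm⟩ :=
    (isOfFinOrder_of_vadd_eq_smul hproper hflowcont hcomm (hp n) (hpu n) (hsu n)).exists_pow_eq_one
  have ht0 : 0 < t := by linarith [ht.1]
  refine ⟨⟨m * t, by positivity, ?_⟩, g n, t, ht0, ht.2, htx⟩
  rw [natCast_mul_vadd_eq_pow_smul hcomm htx, hgm, one_smul]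
end

section
/- Let B be a box in a flow space X, with length l_B and central slice S_B = {x ∈ B | a_-(x) + a_+(x) = 0}. Then the map μ_B : S_B × [-l_B/2, l_B/2] → B, (x,t) ↦ Φ_t(x), is a homeomorphism, equivariant for the stabilizer G_B of B. -/
open Pointwise

theorem stmt18 {G X : Type*} [Group G] [MetricSpace X] [MulAction G X] [AddAction ℝ X]
    (hiso : ∀ g : G, Isometry (fun x : X => g • x))
    (hproper : ∀ K : Set X, IsCompact K → {g : G | (K ∩ g • K).Nonempty}.Finite)
    (hflowcont : Continuous fun p : ℝ × X => p.1 +ᵥ p.2)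
    (hcomm : ∀ (g : G) (t : ℝ) (x : X), t +ᵥ (g • x) = g • (t +ᵥ x))
    -- B is a box of length l
    (B : Set X) (l : ℝ) (hl : 0 < l)
    (hBcompact : IsCompact B)
    (hBfin : ∀ g : G, ((g • B) ∩ B).Nonempty → g • B = B)
    (hBstabfin : ({g : G | g • B = B}).Finite)
    (aminus aplus eps : X → ℝ)
    (hbox : ∀ x ∈ B,
      aminus x ≤ 0 ∧ 0 ≤ aplus x ∧ 0 < eps x ∧
      l = aplus x - aminus x ∧
      (∀ τ ∈ Set.Icc (aminus x) (aplus x), τ +ᵥ x ∈ B) ∧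
      (∀ τ ∈ Set.Ioo (aminus x - eps x) (aminus x), τ +ᵥ x ∉ B) ∧
      (∀ τ ∈ Set.Ioo (aplus x) (aplus x + eps x), τ +ᵥ x ∉ B)) :
    ∃ e : ({x : X | x ∈ B ∧ aminus x + aplus x = 0} × Set.Icc (-(l/2)) (l/2)) ≃ₜ B,
      (∀ p : {x : X | x ∈ B ∧ aminus x + aplus x = 0} × Set.Icc (-(l/2)) (l/2),
        (e p : X) = (p.2 : ℝ) +ᵥ (p.1 : X)) ∧
      -- equivariance for the stabilizer of B
      (∀ g : G, g • B = B →
        ∀ (p : {x : X | x ∈ B ∧ aminus x + aplus x = 0} × Set.Icc (-(l/2)) (l/2))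
          (hgp : g • (p.1 : X) ∈ {x : X | x ∈ B ∧ aminus x + aplus x = 0}),
          (e (⟨g • (p.1 : X), hgp⟩, p.2) : X) = g • (e p : X)) := by
  classical
  have hBclosed : IsClosed B := hBcompact.isClosed
  -- The shift lemma: `aplus` shifts along the flow within a box.
  have hshift : ∀ x ∈ B, ∀ τ ∈ Set.Icc (aminus x) (aplus x),
      aplus (τ +ᵥ x) = aplus x - τ := by
    intro x hx τ hτ
    obtain ⟨hm, hp, he, hlen, hin, hexm, hexp⟩ := hbox x hx
    have hyB : (τ +ᵥ x) ∈ B := hin τ hτ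
    obtain ⟨hm', hp', he', hlen', hin', hexm', hexp'⟩ := hbox _ hyB
    have hsub : ∀ s ∈ Set.Icc (aminus x - τ) (aplus x - τ), s +ᵥ (τ +ᵥ x) ∈ B := by
      intro s hs
      rw [← add_vadd]
      exact hin (s + τ) ⟨by linarith [hs.1], by linarith [hs.2]⟩
    rcases lt_trichotomy (aplus (τ +ᵥ x)) (aplus x - τ) with h | h | h
    · -- too small: contradiction with exclusion just above `aplus (τ +ᵥ x)`
      set τ' := min ((aplus (τ +ᵥ x) + (aplus x - τ))/2) (aplus (τ +ᵥ x) + eps (τ +ᵥ x)/2)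
        with hτ'
      have h1 : aplus (τ +ᵥ x) < τ' := lt_min (by linarith) (by linarith)
      have h2 : τ' < aplus (τ +ᵥ x) + eps (τ +ᵥ x) :=
        lt_of_le_of_lt (min_le_right _ _) (by linarith)
      have h3 : τ' ≤ aplus x - τ := le_trans (min_le_left _ _) (by linarith)
      have h4 : aminus x - τ ≤ τ' := by linarith [hτ.1]
      exact absurd (hsub τ' ⟨h4, h3⟩) (hexp' τ' ⟨h1, h2⟩)
    · exact h
    · -- too big: contradiction with exclusion just below `aminus (τ +ᵥ x)`
      have hmy : aminus x - τ < aminus (τ +ᵥ x) := by linarith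
      set τ' := max ((aminus (τ +ᵥ x) + (aminus x - τ))/2) (aminus (τ +ᵥ x) - eps (τ +ᵥ x)/2)
        with hτ'
      have h1 : τ' < aminus (τ +ᵥ x) := max_lt (by linarith) (by linarith)
      have h2 : aminus (τ +ᵥ x) - eps (τ +ᵥ x) < τ' :=
        lt_of_lt_of_le (by linarith) (le_max_right _ _)
      have h3 : aminus x - τ ≤ τ' := le_trans (by linarith) (le_max_left _ _)
      have h4 : τ' ≤ aplus x - τ := by linarith [hτ.2]
      exact absurd (hsub τ' ⟨h3, h4⟩) (hexm' τ' ⟨h2, h1⟩)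
  -- values of aminus/aplus on the central slice
  have hSval : ∀ x, x ∈ B → aminus x + aplus x = 0 → aminus x = -(l/2) ∧ aplus x = l/2 := by
    intro x hx hsum
    obtain ⟨-, -, -, hlen, -⟩ := hbox x hx
    constructor <;> linarith
  -- key lemma used for closedness of the central slice
  have hkey : ∀ x ∈ B, (∀ τ ∈ Set.Ioo (-(l/2)) (l/2), τ +ᵥ x ∈ B) → aplus x = l/2 := by
    intro x hx hτall
    obtain ⟨hm, hp, he, hlen, hin, hexm, hexp⟩ := hbox x hx
    rcases lt_trichotomy (aplus x) (l/2) with h | h | h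
    · set τ' := min ((aplus x + l/2)/2) (aplus x + eps x/2) with hτ'
      have h1 : aplus x < τ' := lt_min (by linarith) (by linarith)
      have h2 : τ' < aplus x + eps x := lt_of_le_of_lt (min_le_right _ _) (by linarith)
      have h3 : τ' < l/2 := lt_of_le_of_lt (min_le_left _ _) (by linarith)
      have h4 : -(l/2) < τ' := by linarith
      exact absurd (hτall τ' ⟨h4, h3⟩) (hexp τ' ⟨h1, h2⟩)
    · exact h
    · have hmgt : -(l/2) < aminus x := by linarith
      set τ' := max ((aminus x + -(l/2))/2) (aminus x - eps x/2) with hτ'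
      have h1 : τ' < aminus x := max_lt (by linarith) (by linarith)
      have h2 : aminus x - eps x < τ' := lt_of_lt_of_le (by linarith) (le_max_right _ _)
      have h3 : -(l/2) < τ' := lt_of_lt_of_le (by linarith) (le_max_left _ _)
      have h4 : τ' < l/2 := by linarith
      exact absurd (hτall τ' ⟨h3, h4⟩) (hexm τ' ⟨h2, h1⟩)
  -- the central slice is closed
  have hSclosed : IsClosed {x : X | x ∈ B ∧ aminus x + aplus x = 0} := by
    apply IsSeqClosed.isClosed
    intro u x hu hux
    have huB : ∀ n, u n ∈ B := fun n => (hu n).1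
    have hxB : x ∈ B := hBclosed.isSeqClosed huB hux
    have hτ : ∀ τ ∈ Set.Ioo (-(l/2)) (l/2), τ +ᵥ x ∈ B := by
      intro τ hτmem
      have hmem : ∀ n, τ +ᵥ u n ∈ B := by
        intro n
        obtain ⟨hm, hp⟩ := hSval _ (hu n).1 (hu n).2
        obtain ⟨-, -, -, -, hin, -, -⟩ := hbox _ (hu n).1
        exact hin τ ⟨by rw [hm]; exact hτmem.1.le, by rw [hp]; exact hτmem.2.le⟩
      have hcτ : Continuous fun z : X => τ +ᵥ z :=
        hflowcont.comp (continuous_const.prodMk continuous_id)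
      have htd : Filter.Tendsto (fun n => τ +ᵥ u n) Filter.atTop (nhds (τ +ᵥ x)) :=
        (hcτ.tendsto x).comp hux
      exact hBclosed.mem_of_tendsto htd (Filter.Eventually.of_forall hmem)
    have hp := hkey x hxB hτ
    obtain ⟨-, -, -, hlen, -⟩ := hbox x hxB
    exact ⟨hxB, by linarith⟩
  -- facts about the inverse map
  have hmul : ∀ y : X, y ∈ B →
      ((aplus y - l/2) +ᵥ y ∈ B ∧
        aminus ((aplus y - l/2) +ᵥ y) + aplus ((aplus y - l/2) +ᵥ y) = 0 ∧
        -(aplus y - l/2) ∈ Set.Icc (-(l/2)) (l/2)) := by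
    intro y hy
    obtain ⟨hm, hp, he, hlen, hin, -, -⟩ := hbox y hy
    have hc : aplus y - l/2 ∈ Set.Icc (aminus y) (aplus y) := ⟨by linarith, by linarith⟩
    have hzB : (aplus y - l/2) +ᵥ y ∈ B := hin _ hc
    have hz : aplus ((aplus y - l/2) +ᵥ y) = l/2 := by
      rw [hshift y hy _ hc]; ring
    obtain ⟨-, -, -, hlen', -⟩ := hbox _ hzB
    exact ⟨hzB, by linarith, ⟨by linarith, by linarith⟩⟩
  -- the equivalence
  let e0 : ({x : X | x ∈ B ∧ aminus x + aplus x = 0} × Set.Icc (-(l/2)) (l/2)) ≃ B :=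
    { toFun := fun p => ⟨(p.2 : ℝ) +ᵥ (p.1 : X), by
        obtain ⟨hxB, hsum⟩ := p.1.2
        obtain ⟨hxm, hxp⟩ := hSval _ hxB hsum
        obtain ⟨-, -, -, -, hin, -, -⟩ := hbox _ hxB
        exact hin _ ⟨by rw [hxm]; exact p.2.2.1, by rw [hxp]; exact p.2.2.2⟩⟩
      invFun := fun y => (⟨(aplus (y : X) - l/2) +ᵥ (y : X), (hmul _ y.2).1, (hmul _ y.2).2.1⟩,
          ⟨-(aplus (y : X) - l/2), (hmul _ y.2).2.2⟩)
      left_inv := by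
        rintro ⟨⟨x, hxB, hsum⟩, ⟨t, ht⟩⟩
        obtain ⟨hxm, hxp⟩ := hSval x hxB hsum
        have htI : t ∈ Set.Icc (aminus x) (aplus x) :=
          ⟨by rw [hxm]; exact ht.1, by rw [hxp]; exact ht.2⟩
        have h1 : aplus (t +ᵥ x) = l/2 - t := by rw [hshift x hxB t htI, hxp]
        refine Prod.ext (Subtype.ext ?_) (Subtype.ext ?_)
        · show (aplus (t +ᵥ x) - l/2) +ᵥ (t +ᵥ x) = x
          rw [h1]
          have h2 : l/2 - t - l/2 = -t := by ring
          rw [h2, ← add_vadd, neg_add_cancel, zero_vadd]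
        · show -(aplus (t +ᵥ x) - l/2) = t
          rw [h1]; ring
      right_inv := by
        rintro ⟨y, hy⟩
        apply Subtype.ext
        show -(aplus y - l/2) +ᵥ ((aplus y - l/2) +ᵥ y) = y
        rw [← add_vadd, neg_add_cancel, zero_vadd] }
  have hcont : Continuous e0 := by
    apply Continuous.subtype_mk
    exact hflowcont.comp ((continuous_subtype_val.comp continuous_snd).prodMk
      (continuous_subtype_val.comp continuous_fst))
  have hScomp : IsCompact {x : X | x ∈ B ∧ aminus x + aplus x = 0} :=
    hBcompact.of_isClosed_subset hSclosed (fun x hx => hx.1)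
  haveI : CompactSpace ({x : X | x ∈ B ∧ aminus x + aplus x = 0}) :=
    isCompact_iff_compactSpace.mp hScomp
  refine ⟨hcont.homeoOfEquivCompactToT2, fun p => rfl, ?_⟩
  intro g hg p hgp
  show ((p.2 : ℝ) +ᵥ (g • (p.1 : X)) : X) = g • ((p.2 : ℝ) +ᵥ (p.1 : X))
  exact hcomm g _ _
end

section
/- Let FS be a flow space for G with uniformly continuous flow admitting strong contracting transfers. Fix ε > 0, k, n ∈ ℕ, and a finite subset S ⊆ G containing e. Let β be as in the definition of strong contracting transfers and set α := 2nβ; let δ be the modulus from uniform continuity for (α + T, ε); let T, X, Ψ, ι be as provided. Then for every (g,x) ∈ G × X and every (h,y) ∈ Sⁿ_{Ψ,S,k}(g,x) there exists τ ∈ [-α, α] with d_FS(Φ_T(ι(g,x)), Φ_{T+τ}(ι(h,y))) ≤ 2nε. -/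
open Pointwise

theorem stmt19 {G FS X : Type*} [Group G] [MetricSpace FS] [MulAction G FS]
    [AddAction ℝ FS] [MetricSpace X] [CompactSpace X]
    -- FS is a flow space for G:
    (hiso : ∀ g : G, Isometry (fun z : FS => g • z))
    (hproper : ∀ K : Set FS, IsCompact K → {g : G | (K ∩ g • K).Nonempty}.Finite)
    (hflowcont : Continuous fun p : ℝ × FS => p.1 +ᵥ p.2)
    (hcomm : ∀ (g : G) (t : ℝ) (z : FS), t +ᵥ (g • z) = g • (t +ᵥ z))
    -- the transfer space X is compact and contractible:
    (hXcontr : ContractibleSpace X)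
    -- the data: ε, k, n, a finite subset S ∋ e, β, α = 2nβ, δ, T:
    (ε : ℝ) (hε : 0 < ε) (k n : ℕ)
    (S : Set G) (hSfin : S.Finite) (heS : (1 : G) ∈ S)
    (β : ℝ) (hβ : 0 < β)
    (α : ℝ) (hα : α = 2 * n * β)
    (δ : ℝ) (hδ : 0 < δ)
    -- δ is a modulus of uniform continuity of the flow for (α, ε):
    (hunif : ∀ z z' : FS, dist z z' ≤ δ →
      ∀ t ∈ Set.Icc (-α) α, dist (t +ᵥ z) (t +ᵥ z') ≤ ε)
    (T : ℝ) (hT : 0 < T)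
    -- the (length-k part of the) strong homotopy action Ψ and the sets F_g(Ψ,S,k):
    (Ψ : (Fin (k + 1) → G) → (Fin k → ℝ) → X → X)
    (F : G → Set (X → X))
    (hF : ∀ g : G, F g = {f : X → X | ∃ gs : Fin (k + 1) → G, ∃ ts : Fin k → ℝ,
      (∀ i, gs i ∈ S) ∧ (∀ i, ts i ∈ Set.Icc (0 : ℝ) 1) ∧ (List.ofFn gs).prod = g ∧ f = Ψ gs ts})
    -- the G-equivariant map ι : G × X → FS:
    (ι : G × X → FS)
    (hιequiv : ∀ (g g' : G) (x : X), ι (g * g', x) = g • ι (g', x))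
    -- the contracting-transfer property (condition (5)):
    (hcontract : ∀ (g : G) (x : X), ∀ s ∈ S, ∀ f ∈ F g,
      ∃ τ ∈ Set.Icc (-β) β,
        dist (T +ᵥ ι (g, x)) ((T + τ) +ᵥ ι (g * s⁻¹, f x)) ≤ δ)
    -- the iterated relation sets Sⁿ_{Ψ,S,k}:
    (S1 : G × X → Set (G × X))
    (hS1 : ∀ p : G × X, S1 p = {q : G × X | ∃ a ∈ S, ∃ b ∈ S, ∃ f ∈ F a, ∃ f' ∈ F b,
      f p.2 = f' q.2 ∧ q.1 = p.1 * a⁻¹ * b})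
    (Sn : ℕ → G × X → Set (G × X))
    (hSn0 : ∀ p : G × X, Sn 0 p = {p})
    (hSnsucc : ∀ (m : ℕ) (p : G × X), Sn (m + 1) p = ⋃ q ∈ Sn m p, S1 q) :
    ∀ (g : G) (x : X) (h : G) (y : X), (h, y) ∈ Sn n (g, x) →
      ∃ τ ∈ Set.Icc (-α) α,
        dist (T +ᵥ ι (g, x)) ((T + τ) +ᵥ ι (h, y)) ≤ 2 * n * ε := by

  suffices H : ∀ m : ℕ, m ≤ n → ∀ g x h y, (h, y) ∈ Sn m (g, x) →
      ∃ τ ∈ Set.Icc (-(2 * (m : ℝ) * β)) (2 * (m : ℝ) * β),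
        dist (T +ᵥ ι (g, x)) ((T + τ) +ᵥ ι (h, y)) ≤ 2 * m * ε by
    intro g x h y hy
    obtain ⟨τ, hτ, hd⟩ := H n le_rfl g x h y hy
    refine ⟨τ, ?_, hd⟩
    rw [hα]
    exact hτ
  intro m
  induction m with
  | zero =>
    intro _ g x h y hy
    rw [hSn0] at hy
    simp only [Set.mem_singleton_iff, Prod.mk.injEq] at hy
    obtain ⟨rfl, rfl⟩ := hy
    refine ⟨0, by simp, ?_⟩
    simp
  | succ m ih =>
    intro hmn g x h y hy
    rw [hSnsucc] at hy
    simp only [Set.mem_iUnion, exists_prop] at hy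
    obtain ⟨⟨h', y'⟩, hq, hy1⟩ := hy
    obtain ⟨τ, hτ, hd⟩ := ih (Nat.le_of_succ_le hmn) g x h' y' hq
    rw [hS1] at hy1
    obtain ⟨a, haS, b, hbS, f, hf, f', hf', hfy, hh⟩ := hy1
    simp only at hfy hh
    have key : ∀ (c : G) (w : X) (s : G), s ∈ S → ∀ fc ∈ F s,
        ∃ τ' ∈ Set.Icc (-β) β,
          dist (T +ᵥ ι (c * s, w)) ((T + τ') +ᵥ ι (c, fc w)) ≤ δ := by
      intro c w s hs fc hfc
      obtain ⟨τ', hτ', hd'⟩ := hcontract s w s hs fc hfc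
      refine ⟨τ', hτ', ?_⟩
      have e1 : ι (c * s, w) = c • ι (s, w) := hιequiv c s w
      have e2 : ι (c, fc w) = c • ι (s * s⁻¹, fc w) := by
        rw [← hιequiv c (s * s⁻¹) (fc w), mul_inv_cancel, mul_one]
      rw [e1, e2, hcomm, hcomm, (hiso c).dist_eq]
      exact hd'
    obtain ⟨τ₁, hτ₁, hd₁⟩ := key (h' * a⁻¹) y' a haS f hf
    obtain ⟨τ₂, hτ₂, hd₂⟩ := key (h * b⁻¹) y b hbS f' hf'
    rw [inv_mul_cancel_right] at hd₁ hd₂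
    have hmβ : (m : ℝ) ≤ n := by exact_mod_cast Nat.le_of_succ_le hmn
    have hm1β : ((m : ℝ) + 1) ≤ n := by exact_mod_cast hmn
    have hτmem : τ ∈ Set.Icc (-α) α := by
      rw [hα]
      constructor
      · nlinarith [hτ.1, hτ.2]
      · nlinarith [hτ.1, hτ.2]
    have hkey : ι (h * b⁻¹, f' y) = ι (h' * a⁻¹, f y') := by
      rw [hfy, hh]
      congr 1
      group
    rw [hkey] at hd₂
    set z := ι (h' * a⁻¹, f y') with hz
    have h1 := hunif _ _ hd₁ τ hτmem
    have hτ'mem : τ + τ₁ - τ₂ ∈ Set.Icc (-α) α := by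
      rw [hα]
      constructor
      · nlinarith [hτ.1, hτ.2, hτ₁.1, hτ₁.2, hτ₂.1, hτ₂.2]
      · nlinarith [hτ.1, hτ.2, hτ₁.1, hτ₁.2, hτ₂.1, hτ₂.2]
    have h2 := hunif _ _ hd₂ (τ + τ₁ - τ₂) hτ'mem
    rw [← add_vadd, ← add_vadd] at h1 h2
    refine ⟨τ + τ₁ - τ₂, ?_, ?_⟩
    · constructor
      · push_cast
        nlinarith [hτ.1, hτ.2, hτ₁.1, hτ₁.2, hτ₂.1, hτ₂.2]
      · push_cast
        nlinarith [hτ.1, hτ.2, hτ₁.1, hτ₁.2, hτ₂.1, hτ₂.2]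
    · have e1 : τ + T = T + τ := by ring
      have e2 : τ + (T + τ₁) = T + τ + τ₁ := by ring
      have e3 : τ + τ₁ - τ₂ + T = T + (τ + τ₁ - τ₂) := by ring
      have e4 : τ + τ₁ - τ₂ + (T + τ₂) = T + τ + τ₁ := by ring
      rw [e1, e2] at h1
      rw [e3, e4] at h2
      calc dist (T +ᵥ ι (g, x)) ((T + (τ + τ₁ - τ₂)) +ᵥ ι (h, y))
          ≤ dist (T +ᵥ ι (g, x)) ((T + τ) +ᵥ ι (h', y'))
            + dist ((T + τ) +ᵥ ι (h', y')) ((T + τ + τ₁) +ᵥ z)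
            + dist ((T + τ + τ₁) +ᵥ z) ((T + (τ + τ₁ - τ₂)) +ᵥ ι (h, y)) :=
            dist_triangle4 _ _ _ _
        _ ≤ 2 * m * ε + ε + ε :=
            add_le_add (add_le_add hd h1) (by rw [dist_comm]; exact h2)
        _ = 2 * (↑(m + 1)) * ε := by push_cast; ring
end
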